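/- arXiv:2302.05750 — 6 statements merged into one kernel-verified Lean document; each statement's English description precedes it below -/
import Mathlib

section
/- Let L = Σ_{n=-ℓ}^ℓ A_n(k) S^n be a matrix-valued shift operator, and let F, G: ℤ → M_N(ℝ) be functions vanishing at all but finitely many integers. Define the concomitant C_L(F,G;z) = Σ_{n=1}^ℓ ( C_{S^n}(F, A_n* G; z) − C_{S^n}(A_{−n}* G, F; z)* ), where C_{S^n}(F,G;z) = Σ_{i=1}^{n} F(z+i)* G(z+i−n). Then for all integers m ≤ n, Σ_{k=m}^n [ (L·F)(k)* G(k) − F(k)* (L*·G)(k) ] = C_L(F,G;n) − C_L(F,G;m−1). -/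
open Matrix

/-- The elementary concomitant `C_{S^n}(F,G;z) = ∑_{i=1}^n F(z+i)ᵀ G(z+i-n)`. -/
noncomputable def CS {N : ℕ} (n : ℕ) (F G : ℤ → Matrix (Fin N) (Fin N) ℝ) (z : ℤ) :
    Matrix (Fin N) (Fin N) ℝ :=
  ∑ i ∈ Finset.Icc 1 n, (F (z + (i : ℤ)))ᵀ * G (z + (i : ℤ) - (n : ℤ))

/-- The bilinear concomitant of the shift operator `L = ∑_{n=-ℓ}^ℓ A_n(k) S^n`:
`C_L(F,G;z) = ∑_{n=1}^ℓ ( C_{S^n}(F, A_nᵀ G; z) − C_{S^n}(A_{-n}ᵀ G, F; z)ᵀ )`. -/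
noncomputable def CL {N : ℕ} (ℓ : ℕ) (A : ℤ → ℤ → Matrix (Fin N) (Fin N) ℝ)
    (F G : ℤ → Matrix (Fin N) (Fin N) ℝ) (z : ℤ) : Matrix (Fin N) (Fin N) ℝ :=
  ∑ n ∈ Finset.Icc 1 ℓ,
    (CS n F (fun k => (A (n : ℤ) k)ᵀ * G k) z
      - (CS n (fun k => (A (-(n : ℤ)) k)ᵀ * G k) F z)ᵀ)

def negEmb : ℕ ↪ ℤ := ⟨fun n => -(n:ℤ), by intro a b h; simpa using h⟩
def castEmb : ℕ ↪ ℤ := ⟨fun n => (n:ℤ), by intro a b h; simpa using h⟩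

@[simp] lemma negEmb_apply (n : ℕ) : negEmb n = -(n:ℤ) := rfl
@[simp] lemma castEmb_apply (n : ℕ) : castEmb n = (n:ℤ) := rfl

lemma telescope {M : Type*} [AddCommGroup M] (f : ℤ → M) (m : ℤ) :
    ∀ n : ℤ, m ≤ n → ∑ k ∈ Finset.Icc m n, (f k - f (k-1)) = f n - f (m-1) := by
  refine Int.le_induction ?_ ?_
  · rw [Finset.Icc_self, Finset.sum_singleton]
  · intro n hn ih
    have hins : Finset.Icc m (n+1) = insert (n+1) (Finset.Icc m n) := by
      ext x; simp only [Finset.mem_Icc, Finset.mem_insert]; omega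
    rw [hins, Finset.sum_insert (by simp only [Finset.mem_Icc]; omega), ih,
        show n + 1 - 1 = n from by ring]
    abel

lemma CS_sub {N : ℕ} (n : ℕ) (F G : ℤ → Matrix (Fin N) (Fin N) ℝ) (z : ℤ) :
    CS n F G z - CS n F G (z - 1)
      = (F (z + n))ᵀ * G z - (F z)ᵀ * G (z - n) := by
  rcases Nat.eq_zero_or_pos n with h | h
  · subst h; simp [CS]
  · have h2 : CS n F G (z - 1)
        = ∑ i ∈ Finset.Icc 0 (n-1), (F (z + (i:ℤ)))ᵀ * G (z + (i:ℤ) - n) := by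
      unfold CS
      have hmap : Finset.Icc 1 n = (Finset.Icc 0 (n-1)).map ⟨(· + 1), add_left_injective 1⟩ := by
        ext x
        simp only [Finset.mem_Icc, Finset.mem_map, Function.Embedding.coeFn_mk]
        constructor
        · rintro ⟨h1, h2⟩; exact ⟨x - 1, ⟨by omega, by omega⟩, by omega⟩
        · rintro ⟨a, ⟨_, ha⟩, rfl⟩; omega
      rw [hmap, Finset.sum_map]
      apply Finset.sum_congr rfl
      intro i _
      simp only [Function.Embedding.coeFn_mk]
      push_cast
      ring_nf
    rw [h2]
    unfold CS
    have e1 : Finset.Icc 1 n = insert n (Finset.Icc 1 (n-1)) := by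
      ext x; simp only [Finset.mem_Icc, Finset.mem_insert]; omega
    have e2 : Finset.Icc 0 (n-1) = insert 0 (Finset.Icc 1 (n-1)) := by
      ext x; simp only [Finset.mem_Icc, Finset.mem_insert]; omega
    rw [e1, e2, Finset.sum_insert (by simp only [Finset.mem_Icc]; omega),
        Finset.sum_insert (by simp only [Finset.mem_Icc]; omega)]
    rw [show z + (n:ℤ) - n = z from by ring]
    simp only [Nat.cast_zero, add_zero]
    abel

lemma CL_sub {N : ℕ} (ℓ : ℕ) (A : ℤ → ℤ → Matrix (Fin N) (Fin N) ℝ)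
    (F G : ℤ → Matrix (Fin N) (Fin N) ℝ) (k : ℤ) :
    (∑ j ∈ Finset.Icc (-(ℓ : ℤ)) (ℓ : ℤ), A j k * F (k + j))ᵀ * G k
      - (F k)ᵀ * ∑ j ∈ Finset.Icc (-(ℓ : ℤ)) (ℓ : ℤ), (A (-j) (k + j))ᵀ * G (k + j)
      = CL ℓ A F G k - CL ℓ A F G (k - 1) := by
  have hR : CL ℓ A F G k - CL ℓ A F G (k - 1)
      = ∑ n ∈ Finset.Icc 1 ℓ,
          (((F (k + n))ᵀ * ((A (n:ℤ) k)ᵀ * G k)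
              - (F k)ᵀ * ((A (n:ℤ) (k - n))ᵀ * G (k - n)))
            - (((A (-(n:ℤ)) (k + n))ᵀ * G (k + n))ᵀ * F k
              - ((A (-(n:ℤ)) k)ᵀ * G k)ᵀ * F (k - n))ᵀ) := by
    unfold CL
    rw [← Finset.sum_sub_distrib]
    apply Finset.sum_congr rfl
    intro n _
    rw [← CS_sub n F (fun k => (A (n:ℤ) k)ᵀ * G k) k,
        ← CS_sub n (fun k => (A (-(n:ℤ)) k)ᵀ * G k) F k]
    simp only [transpose_sub]
    abel
  rw [hR]
  have hL : (∑ j ∈ Finset.Icc (-(ℓ : ℤ)) (ℓ : ℤ), A j k * F (k + j))ᵀ * G k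
      - (F k)ᵀ * ∑ j ∈ Finset.Icc (-(ℓ : ℤ)) (ℓ : ℤ), (A (-j) (k + j))ᵀ * G (k + j)
      = ∑ j ∈ Finset.Icc (-(ℓ : ℤ)) (ℓ : ℤ),
          ((F (k + j))ᵀ * (A j k)ᵀ * G k - (F k)ᵀ * ((A (-j) (k + j))ᵀ * G (k + j))) := by
    rw [transpose_sum, Finset.sum_mul, Finset.mul_sum, ← Finset.sum_sub_distrib]
    apply Finset.sum_congr rfl
    intro j _
    rw [transpose_mul]
  rw [hL]
  set g : ℤ → Matrix (Fin N) (Fin N) ℝ := fun j =>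
    (F (k + j))ᵀ * (A j k)ᵀ * G k - (F k)ᵀ * ((A (-j) (k + j))ᵀ * G (k + j)) with hg
  have hsplit : Finset.Icc (-(ℓ : ℤ)) (ℓ : ℤ)
      = (Finset.Icc (-(ℓ:ℤ)) (-1)) ∪ (Finset.Icc 0 (ℓ:ℤ)) := by
    ext x; simp only [Finset.mem_Icc, Finset.mem_union]; omega
  have hdisj : Disjoint (Finset.Icc (-(ℓ:ℤ)) (-1)) (Finset.Icc 0 (ℓ:ℤ)) := by
    rw [Finset.disjoint_left]; intro a ha hb
    simp only [Finset.mem_Icc] at ha hb; omega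
  rw [hsplit, Finset.sum_union hdisj]
  have hneg : ∑ j ∈ Finset.Icc (-(ℓ:ℤ)) (-1), g j
      = ∑ n ∈ Finset.Icc 1 ℓ, g (-(n:ℤ)) := by
    have : Finset.Icc (-(ℓ:ℤ)) (-1) = (Finset.Icc 1 ℓ).map negEmb := by
      ext x
      simp only [Finset.mem_Icc, Finset.mem_map, negEmb_apply]
      constructor
      · rintro ⟨h1, h2⟩
        exact ⟨x.natAbs, ⟨by omega, by omega⟩, by omega⟩
      · rintro ⟨a, ⟨ha1, ha2⟩, rfl⟩; omega
    rw [this, Finset.sum_map]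
    simp only [negEmb_apply]
  have hpos : ∑ j ∈ Finset.Icc (0:ℤ) (ℓ:ℤ), g j = g 0 + ∑ n ∈ Finset.Icc 1 ℓ, g (n:ℤ) := by
    have h1 : Finset.Icc (0:ℤ) (ℓ:ℤ) = (Finset.Icc 0 ℓ).map castEmb := by
      ext x
      simp only [Finset.mem_Icc, Finset.mem_map, castEmb_apply]
      constructor
      · rintro ⟨hx1, hx2⟩; exact ⟨x.natAbs, ⟨by omega, by omega⟩, by omega⟩
      · rintro ⟨a, ⟨_, ha⟩, rfl⟩; omega
    have h2 : Finset.Icc 0 ℓ = insert 0 (Finset.Icc 1 ℓ) := by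
      ext x; simp only [Finset.mem_Icc, Finset.mem_insert]; omega
    rw [h1, Finset.sum_map, h2, Finset.sum_insert (by simp only [Finset.mem_Icc]; omega)]
    simp only [castEmb_apply, Nat.cast_zero]
  rw [hneg, hpos]
  have hg0 : g 0 = 0 := by simp [hg, mul_assoc]
  rw [hg0, zero_add, ← Finset.sum_add_distrib]
  apply Finset.sum_congr rfl
  intro n _
  simp only [hg, transpose_mul, transpose_transpose, transpose_sub, neg_neg]
  rw [show k + -(n:ℤ) = k - n from by ring]
  simp only [mul_assoc]
  abel

/-- summation by parts for matrix valued shift operators.  For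
`L = ∑_{n=-ℓ}^ℓ A_n(k) S^n` acting by `(L·F)(k) = ∑ A_n(k) F(k+n)`, with
formal adjoint acting by `(L*·G)(k) = ∑ A_{-n}(k+n)ᵀ G(k+n)`, and `F, G`
finitely supported, one has for all integers `m ≤ n`:
`∑_{k=m}^n [ (L·F)(k)ᵀ G(k) − F(k)ᵀ (L*·G)(k) ] = C_L(F,G;n) − C_L(F,G;m−1)`. -/
theorem stmt4 {N : ℕ} (ℓ : ℕ) (A : ℤ → ℤ → Matrix (Fin N) (Fin N) ℝ)
    (hband : ∀ n : ℤ, (ℓ : ℤ) < |n| → A n = 0)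
    (F G : ℤ → Matrix (Fin N) (Fin N) ℝ)
    (hF : (Function.support F).Finite) (hG : (Function.support G).Finite) :
    ∀ m n : ℤ, m ≤ n →
      ∑ k ∈ Finset.Icc m n,
        ((∑ j ∈ Finset.Icc (-(ℓ : ℤ)) (ℓ : ℤ), A j k * F (k + j))ᵀ * G k
          - (F k)ᵀ * ∑ j ∈ Finset.Icc (-(ℓ : ℤ)) (ℓ : ℤ), (A (-j) (k + j))ᵀ * G (k + j))
        = CL ℓ A F G n - CL ℓ A F G (m - 1) := by
  intro m n hmn
  calc ∑ k ∈ Finset.Icc m n,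
        ((∑ j ∈ Finset.Icc (-(ℓ : ℤ)) (ℓ : ℤ), A j k * F (k + j))ᵀ * G k
          - (F k)ᵀ * ∑ j ∈ Finset.Icc (-(ℓ : ℤ)) (ℓ : ℤ), (A (-j) (k + j))ᵀ * G (k + j))
      = ∑ k ∈ Finset.Icc m n, (CL ℓ A F G k - CL ℓ A F G (k - 1)) :=
        Finset.sum_congr rfl (fun k _ => CL_sub ℓ A F G k)
    _ = CL ℓ A F G n - CL ℓ A F G (m - 1) := telescope (CL ℓ A F G) m n hmn
end

section
/- Let Ψ ∈ M be a bispectral function and let Ψ̃ = F^{-1} P · Ψ · G^{-1} be a bispectral Darboux transformation, meaning also Ψ = P̃ F̃^{-1} · Ψ̃ · G̃^{-1} for P, P̃ ∈ F_k(Ψ), invertible multiplicative operators F, F̃ ∈ K_k and G, G̃ ∈ K_x, with D G^{-1} G̃^{-1} D̃ ∈ B_x(Ψ) where D = b_Ψ(P), D̃ = b_Ψ(P̃), and P̃ not a left zero divisor. Then P̃ F̃^{-1} F^{-1} P · Ψ = Ψ · G̃ G and F^{-1} P P̃ F̃^{-1} · Ψ̃ = Ψ̃ · G G̃. -/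
/-- let `Ψ̃ = F⁻¹ P · Ψ · G⁻¹` be a bispectral Darboux
transformation of a bispectral function `Ψ` (so also
`Ψ = P̃ F̃⁻¹ · Ψ̃ · G̃⁻¹`, with `P, P̃` in the left Fourier algebra of `Ψ`
witnessed by `D = b_Ψ(P)`, `D̃ = b_Ψ(P̃)`, `F, F̃` invertible multiplicative
operators in `Kk`, `G, G̃` invertible multiplicative operators in `Kx`,
`D G⁻¹ G̃⁻¹ D̃ ∈ B_x(Ψ)`, and `P̃` not a left zero divisor).  Then
`P̃ F̃⁻¹ F⁻¹ P · Ψ = Ψ · G̃ G` and `F⁻¹ P P̃ F̃⁻¹ · Ψ̃ = Ψ̃ · G G̃`.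
Right actions are encoded as left actions of the opposite algebra. -/
theorem stmt7 {Dk Dx M : Type*} [Ring Dk] [Algebra ℝ Dk] [Ring Dx] [Algebra ℝ Dx]
    [AddCommGroup M] [Module Dk M] [Module Dxᵐᵒᵖ M] [SMulCommClass Dk Dxᵐᵒᵖ M]
    (Kk : Subalgebra ℝ Dk) (Kx : Subalgebra ℝ Dx)
    (Ψ Ψ' : M) (P P' : Dk) (D D' : Dx) (F F' : Dkˣ) (G G' : Dxˣ)
    (hl : ∀ Q : Dk, Q • Ψ = 0 → Q = 0)
    (hr : ∀ E : Dx, MulOpposite.op E • Ψ = 0 → E = 0)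
    (hF : (F : Dk) ∈ Kk) (hFi : ((F⁻¹ : Dkˣ) : Dk) ∈ Kk)
    (hF' : (F' : Dk) ∈ Kk) (hF'i : ((F'⁻¹ : Dkˣ) : Dk) ∈ Kk)
    (hG : (G : Dx) ∈ Kx) (hGi : ((G⁻¹ : Dxˣ) : Dx) ∈ Kx)
    (hG' : (G' : Dx) ∈ Kx) (hG'i : ((G'⁻¹ : Dxˣ) : Dx) ∈ Kx)
    (hD : P • Ψ = MulOpposite.op D • Ψ)
    (hD' : P' • Ψ = MulOpposite.op D' • Ψ)
    (hΨ' : Ψ' = MulOpposite.op ((G⁻¹ : Dxˣ) : Dx) • ((((F⁻¹ : Dkˣ) : Dk) * P) • Ψ))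
    (hΨ : Ψ = MulOpposite.op ((G'⁻¹ : Dxˣ) : Dx) • ((P' * ((F'⁻¹ : Dkˣ) : Dk)) • Ψ'))
    (hB : ∃ Q : Dk, Q ∈ Kk ∧
      Q • Ψ = MulOpposite.op (D * ((G⁻¹ : Dxˣ) : Dx) * ((G'⁻¹ : Dxˣ) : Dx) * D') • Ψ)
    (hnzd : ∀ Q : Dk, P' * Q = 0 → Q = 0) :
    (P' * ((F'⁻¹ : Dkˣ) : Dk) * ((F⁻¹ : Dkˣ) : Dk) * P) • Ψ
        = MulOpposite.op ((G' : Dx) * (G : Dx)) • Ψ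
    ∧ (((F⁻¹ : Dkˣ) : Dk) * P * P' * ((F'⁻¹ : Dkˣ) : Dk)) • Ψ'
        = MulOpposite.op ((G : Dx) * (G' : Dx)) • Ψ' := by
  have part1 : (P' * ((F'⁻¹ : Dkˣ) : Dk) * ((F⁻¹ : Dkˣ) : Dk) * P) • Ψ
      = MulOpposite.op ((G' : Dx) * (G : Dx)) • Ψ := by
    have e1 : MulOpposite.op ((G' : Dx) * (G : Dx)) • Ψ
        = (P' * ((F'⁻¹ : Dkˣ) : Dk) * ((F⁻¹ : Dkˣ) : Dk) * P) • Ψ := by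
      conv_lhs => rw [hΨ, hΨ']
      rw [smul_comm (P' * ((F'⁻¹ : Dkˣ) : Dk))]
      rw [smul_smul, smul_smul, smul_smul,
        ← MulOpposite.op_mul, ← MulOpposite.op_mul]
      have hg : ((G⁻¹ : Dxˣ) : Dx) * (((G'⁻¹ : Dxˣ) : Dx) * ((G' : Dx) * (G : Dx)))
          = (1 : Dx) := by
        rw [← mul_assoc ((G'⁻¹ : Dxˣ) : Dx), G'.inv_mul, one_mul, G.inv_mul]
      rw [hg, MulOpposite.op_one, one_smul]
      congr 1
      noncomm_ring
    exact e1.symm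
  refine ⟨part1, ?_⟩
  rw [hΨ']
  rw [smul_comm _ (MulOpposite.op ((G⁻¹ : Dxˣ) : Dx)), smul_smul (MulOpposite.op _),
    ← MulOpposite.op_mul, ← mul_smul]
  have hA : ((F⁻¹ : Dkˣ) : Dk) * P * P' * ((F'⁻¹ : Dkˣ) : Dk) * (((F⁻¹ : Dkˣ) : Dk) * P)
      = ((F⁻¹ : Dkˣ) : Dk) * P * (P' * ((F'⁻¹ : Dkˣ) : Dk) * ((F⁻¹ : Dkˣ) : Dk) * P) := by
    noncomm_ring
  rw [hA, mul_smul, part1, smul_comm (((F⁻¹ : Dkˣ) : Dk) * P), smul_smul,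
    ← MulOpposite.op_mul]
  congr 2
  calc (G' : Dx) * (G : Dx) * ((G⁻¹ : Dxˣ) : Dx)
      = (G' : Dx) := by rw [mul_assoc, G.mul_inv, mul_one]
    _ = ((G⁻¹ : Dxˣ) : Dx) * ((G : Dx) * (G' : Dx)) := by
        rw [← mul_assoc, G.inv_mul, one_mul]
end

section
/- In the setting of a bispectral Darboux transformation Ψ̃ = F^{-1} P · Ψ G^{-1}, Ψ = P̃ F̃^{-1} · Ψ̃ G̃^{-1} with P̃ not a left zero divisor in D_k, one has Ψ · D G^{-1} G̃^{-1} D̃ = F F̃ Ψ, where D = b_Ψ(P) and D̃ = b_Ψ(P̃). -/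
/-- in the setting of a bispectral Darboux transformation
`Ψ̃ = F⁻¹ P · Ψ G⁻¹`, `Ψ = P̃ F̃⁻¹ · Ψ̃ G̃⁻¹` with `P̃` not a left zero
divisor in `D_k`, one has `Ψ · D G⁻¹ G̃⁻¹ D̃ = F F̃ Ψ`, where `D = b_Ψ(P)`
and `D̃ = b_Ψ(P̃)`.  Right actions are encoded as left actions of the
opposite algebra. -/
theorem stmt8 {Dk Dx M : Type*} [Ring Dk] [Algebra ℝ Dk] [Ring Dx] [Algebra ℝ Dx]
    [AddCommGroup M] [Module Dk M] [Module Dxᵐᵒᵖ M] [SMulCommClass Dk Dxᵐᵒᵖ M]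
    (Kk : Subalgebra ℝ Dk) (Kx : Subalgebra ℝ Dx)
    (Ψ Ψ' : M) (P P' : Dk) (D D' : Dx) (F F' : Dkˣ) (G G' : Dxˣ)
    (hl : ∀ Q : Dk, Q • Ψ = 0 → Q = 0)
    (hr : ∀ E : Dx, MulOpposite.op E • Ψ = 0 → E = 0)
    (hF : (F : Dk) ∈ Kk) (hFi : ((F⁻¹ : Dkˣ) : Dk) ∈ Kk)
    (hF' : (F' : Dk) ∈ Kk) (hF'i : ((F'⁻¹ : Dkˣ) : Dk) ∈ Kk)
    (hG : (G : Dx) ∈ Kx) (hGi : ((G⁻¹ : Dxˣ) : Dx) ∈ Kx)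
    (hG' : (G' : Dx) ∈ Kx) (hG'i : ((G'⁻¹ : Dxˣ) : Dx) ∈ Kx)
    (hD : P • Ψ = MulOpposite.op D • Ψ)
    (hD' : P' • Ψ = MulOpposite.op D' • Ψ)
    (hΨ' : Ψ' = MulOpposite.op ((G⁻¹ : Dxˣ) : Dx) • ((((F⁻¹ : Dkˣ) : Dk) * P) • Ψ))
    (hΨ : Ψ = MulOpposite.op ((G'⁻¹ : Dxˣ) : Dx) • ((P' * ((F'⁻¹ : Dkˣ) : Dk)) • Ψ'))
    (hB : ∃ Q : Dk, Q ∈ Kk ∧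
      Q • Ψ = MulOpposite.op (D * ((G⁻¹ : Dxˣ) : Dx) * ((G'⁻¹ : Dxˣ) : Dx) * D') • Ψ)
    (hnzd : ∀ Q : Dk, P' * Q = 0 → Q = 0) :
    MulOpposite.op (D * ((G⁻¹ : Dxˣ) : Dx) * ((G'⁻¹ : Dxˣ) : Dx) * D') • Ψ
      = ((F : Dk) * (F' : Dk)) • Ψ := by
  haveI : SMulCommClass Dxᵐᵒᵖ Dk M := SMulCommClass.symm _ _ _
  obtain ⟨Q, -, hQ⟩ := hB
  set g : Dx := ((G⁻¹ : Dxˣ) : Dx) with hg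
  set g' : Dx := ((G'⁻¹ : Dxˣ) : Dx) with hg'
  set Fi : Dk := ((F⁻¹ : Dkˣ) : Dk) with hFi'
  set F'i : Dk := ((F'⁻¹ : Dkˣ) : Dk) with hF'i'
  -- Step 1: F • Ψ' = op g • (P • Ψ)
  have h1 : (F : Dk) • Ψ' = MulOpposite.op g • (P • Ψ) := by
    rw [hΨ', smul_comm, ← mul_smul, ← mul_assoc]
    norm_num [hFi']
  -- Step 2: decompose the LHS
  have h2 : MulOpposite.op (D * g * g' * D') • Ψ
      = (F : Dk) • (MulOpposite.op (g' * D') • Ψ') := by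
    have e : D * g * g' * D' = D * (g * (g' * D')) := by
      rw [mul_assoc, mul_assoc]
    rw [e, MulOpposite.op_mul, mul_smul, MulOpposite.op_mul, mul_smul,
      ← hD, ← h1, smul_comm]
  -- Step 3: express op (g' * D') • Ψ' via Q
  have h3 : MulOpposite.op (g' * D') • Ψ' = (Fi * Q) • Ψ := by
    rw [mul_smul, hQ.trans h2, ← mul_smul, hFi', Units.inv_mul, one_smul]
  -- Step 4: Ψ = (P' * F'⁻¹) • (op g' • Ψ')
  have h4 : Ψ = (P' * F'i) • (MulOpposite.op g' • Ψ') := by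
    rw [hΨ, smul_comm]
  have hZ : MulOpposite.op D' • (MulOpposite.op g' • Ψ') = (Fi * Q) • Ψ := by
    rw [← mul_smul, ← MulOpposite.op_mul]; exact h3
  -- Step 5
  have h5 : (P' * F'i * (Fi * Q)) • Ψ = P' • Ψ := by
    calc (P' * F'i * (Fi * Q)) • Ψ = (P' * F'i) • ((Fi * Q) • Ψ) := by rw [mul_smul]
      _ = (P' * F'i) • (MulOpposite.op D' • (MulOpposite.op g' • Ψ')) := by rw [hZ]
      _ = MulOpposite.op D' • ((P' * F'i) • (MulOpposite.op g' • Ψ')) := smul_comm _ _ _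
      _ = MulOpposite.op D' • Ψ := by rw [← h4]
      _ = P' • Ψ := hD'.symm
  -- Step 6: derive Q = F * F'
  have h6 : P' * (F'i * (Fi * Q) - 1) = 0 := by
    apply hl
    rw [mul_sub, mul_one, sub_smul, ← mul_assoc, h5, sub_self]
  have h7 : F'i * (Fi * Q) = 1 := sub_eq_zero.mp (hnzd _ h6)
  have h8 : Q = (F : Dk) * (F' : Dk) := by
    have e1 : Fi * Q = (F' : Dk) := by
      have := congrArg (fun x => (F' : Dk) * x) h7
      simpa [← mul_assoc, hF'i', Units.mul_inv] using this
    have := congrArg (fun x => (F : Dk) * x) e1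
    simpa [← mul_assoc, hFi', Units.mul_inv] using this
  rw [← hQ, h8]
end

section
/- For Ψ(k,x) = x^k I_N on ℤ × (0,∞), the left Fourier algebra is F_k(Ψ) = M_N(ℝ)[k, S_k^{±1}], the right Fourier algebra is F_x(Ψ) = M_N(ℝ)[∂_x, x^{±1}] (opposite algebra), and the generalized Fourier map is determined by b_Ψ(k) = ∂_x x, b_Ψ(S_k) = x, b_Ψ(A) = A for A ∈ M_N(ℝ). In particular dim_ℝ F_k^{2ℓ,2m}(Ψ) = (2ℓ+1)(2m+1)N². -/
/-
Since `∂ⁿ xᵏ = (k)ₙ xᵏ⁻ⁿ` with the falling factorial `(k)ₙ`, the intertwining relation between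
`∑ cₙ(k) S_kⁿ` and `∑ ∂ⁿ bₙ(x)` through `Ψ = xᵏ` reads, after division by `xᵏ`,
`∑ₙ xⁿ cₙ(k) = ∑ₚ (k)ₚ x⁻ᵖ bₚ(x)`.
Reading off the Laurent coefficients in `x` from finitely many values (a Vandermonde system)
writes every `cₙ` as a fixed combination of the `k ↦ (k)ₚ`, `p ≤ M`, so it is a polynomial of
degree at most the order `M`; conversely `kʲ = ∑ₚ S(j, p) (k)ₚ` (Stirling numbers of the second
kind) turns polynomial coefficients into a differential operator. Symmetrically, the values at
`k = 0, …, M` (a triangular system in the `(t)ₚ`) make every `bₚ` a Laurent polynomial, and an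
index shift gives the converse. `F_k^{2ℓ,2m}(Ψ)` is thus the space of band-limited sequences of
matrix polynomials of degree `≤ 2m`, and `(∂ₓ x)ʲ xᵏ = kʲ xᵏ` identifies the Fourier map.
-/

open Matrix

/-- The right action of `∂_x x` on scalar functions: `g ↦ g'(x)·x`. -/
noncomputable def rAct : (ℝ → ℝ) → (ℝ → ℝ) := fun g x => deriv g x * x

open Finset Polynomial

theorem iteratedDeriv_zpow {𝕜 : Type*} [NontriviallyNormedField 𝕜] (k : ℤ) (n : ℕ) (x : 𝕜) :
    iteratedDeriv n (fun y : 𝕜 => y ^ k) x = (descPochhammer 𝕜 n).eval (k : 𝕜) * x ^ (k - n) := by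
  rw [iteratedDeriv_eq_iterate, iter_deriv_zpow, descPochhammer_eval_eq_prod_range]

theorem X_pow_eq_sum_stirlingSecond_mul_descPochhammer (R : Type*) [CommRing R] (n : ℕ) :
    (X : R[X]) ^ n = ∑ p ∈ range (n + 1), (n.stirlingSecond p : R[X]) * descPochhammer R p := by
  induction n with
  | zero => simp
  | succ n ih =>
    set S := fun p => (n.stirlingSecond p : R[X])
    have hlast : ∑ p ∈ range (n + 2), (p : R[X]) * S p * descPochhammer R p
        = ∑ p ∈ range (n + 1), (p : R[X]) * S p * descPochhammer R p := by
      simp [S, sum_range_succ, Nat.stirlingSecond_eq_zero_of_lt (Nat.lt_succ_self n)]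
    calc (X : R[X]) ^ (n + 1)
        = ∑ p ∈ range (n + 1), (S p * descPochhammer R (p + 1) + p * S p * descPochhammer R p) := by
          rw [pow_succ', ih, mul_sum]
          refine sum_congr rfl fun p _ => ?_
          rw [descPochhammer_succ_right]; ring
      _ = ∑ p ∈ range (n + 2), ((n + 1).stirlingSecond p : R[X]) * descPochhammer R p := by
          rw [sum_add_distrib, ← hlast, sum_range_succ' _ (n + 1), sum_range_succ' _ (n + 1)]
          simp [S, Nat.stirlingSecond_succ_succ, add_mul, sum_add_distrib, mul_assoc, add_comm]

theorem pow_eq_sum_stirlingSecond_mul_descPochhammer_eval {R : Type*} [CommRing R] (r : R)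
    {n d : ℕ} (hn : n ≤ d) :
    r ^ n = ∑ p ∈ range (d + 1), (n.stirlingSecond p : R) * (descPochhammer R p).eval r := by
  have h := congrArg (eval r) (X_pow_eq_sum_stirlingSecond_mul_descPochhammer R n)
  simp only [eval_pow, eval_X, eval_finsetSum, eval_mul, eval_natCast] at h
  rw [h]
  refine sum_subset (range_subset_range.2 (by omega)) fun p _ hp => ?_
  rw [Nat.stirlingSecond_eq_zero_of_lt (by simpa using hp), Nat.cast_zero, zero_mul]

theorem Matrix.eq_sum_inv_smul_sum_smul {R V ι : Type*} [CommRing R] [AddCommGroup V] [Module R V]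
    [Fintype ι] [DecidableEq ι] (P : Matrix ι ι R) (hP : IsUnit P.det) (a : ι → V) (j : ι) :
    a j = ∑ t, P⁻¹ j t • ∑ i, P t i • a i := by
  simp only [smul_sum, smul_smul]
  rw [sum_comm]
  simp only [← sum_smul, ← Matrix.mul_apply, Matrix.nonsing_inv_mul P hP, Matrix.one_apply,
    ite_smul, one_smul, zero_smul, sum_ite_eq, mem_univ, if_true]

section Extraction

variable {K V : Type*} [Field K] [AddCommGroup V] [Module K V]

theorem exists_eq_sum_smul_sum_of_det_ne_zero {d : ℕ} (f : ℕ → ℕ → K)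
    (hf : (Matrix.of fun t j : Fin (d + 1) => f t j).det ≠ 0) :
    ∃ w : ℕ → Fin (d + 1) → K, ∀ (a : ℕ → V), ∀ i ≤ d,
      a i = ∑ t : Fin (d + 1), w i t • ∑ j ∈ range (d + 1), f t j • a j := by
  set P := Matrix.of fun t j : Fin (d + 1) => f t j
  refine ⟨fun i t => if h : i < d + 1 then P⁻¹ ⟨i, h⟩ t else 0, fun a i hi => ?_⟩
  have hi' : i < d + 1 := by omega
  simp only [dif_pos hi']
  convert P.eq_sum_inv_smul_sum_smul (isUnit_iff_ne_zero.2 hf) (fun j => a j) ⟨i, hi'⟩ using 3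
  exact (Fin.sum_univ_eq_sum_range (fun j => f _ j • a j) _).symm

theorem sum_range_pow_smul_eq_zpow_smul_sum_Icc {x : K} (hx : x ≠ 0) (B : ℕ) (a : ℤ → V) :
    ∑ i ∈ range (2 * B + 1), x ^ i • a (i - B)
      = x ^ (B : ℤ) • ∑ n ∈ Icc (-(B : ℤ)) B, x ^ n • a n := by
  rw [smul_sum]
  refine sum_nbij' (fun i => (i : ℤ) - B) (fun n => (n + B).toNat) ?_ ?_ ?_ ?_ ?_
  all_goals intro i hi; simp only [mem_range, mem_Icc] at hi ⊢
  · omega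
  · omega
  · omega
  · omega
  · rw [smul_smul, ← zpow_natCast, ← zpow_add₀ hx, add_sub_cancel]

variable [CharZero K]

theorem exists_eq_sum_smul_sum_pow (d : ℕ) :
    ∃ w : ℕ → Fin (d + 1) → K, ∀ (a : ℕ → V), ∀ i ≤ d,
      a i = ∑ t : Fin (d + 1), w i t • ∑ j ∈ range (d + 1), ((t : K) + 1) ^ j • a j := by
  refine exists_eq_sum_smul_sum_of_det_ne_zero (fun t j => ((t : K) + 1) ^ j) ?_
  refine Matrix.det_vandermonde_ne_zero_iff.2 fun s t h => ?_
  simpa [Fin.ext_iff] using h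

theorem exists_eq_sum_smul_sum_descPochhammer (d : ℕ) :
    ∃ w : ℕ → Fin (d + 1) → K, ∀ (a : ℕ → V), ∀ i ≤ d,
      a i = ∑ t : Fin (d + 1), w i t •
        ∑ j ∈ range (d + 1), (descPochhammer K j).eval (t : K) • a j := by
  refine exists_eq_sum_smul_sum_of_det_ne_zero (fun t j => (descPochhammer K j).eval (t : K)) ?_
  have hlower :
      (Matrix.of fun t j : Fin (d + 1) => (descPochhammer K j).eval (t : K)).IsLowerTriangular :=
    fun t j htj => by
      simpa [descPochhammer_eval_eq_descFactorial] using OrderDual.toDual_lt_toDual.1 htj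
  rw [Matrix.det_of_isLowerTriangular _ hlower]
  simp [descPochhammer_eval_eq_descFactorial, Nat.descFactorial_self, Finset.prod_ne_zero_iff,
    Nat.factorial_ne_zero]

theorem exists_eq_sum_smul_sum_zpow (B : ℕ) :
    ∃ w : ℤ → Fin (2 * B + 1) → K, ∀ (a : ℤ → V), ∀ n ∈ Icc (-(B : ℤ)) B,
      a n = ∑ t, w n t • ∑ i ∈ Icc (-(B : ℤ)) B, ((t : K) + 1) ^ i • a i := by
  obtain ⟨w, hw⟩ := exists_eq_sum_smul_sum_pow (K := K) (V := V) (2 * B)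
  refine ⟨fun n t => w (n + B).toNat t * ((t : K) + 1) ^ (B : ℤ), fun a n hn => ?_⟩
  rw [mem_Icc] at hn
  have h := hw (fun i => a (i - B)) (n + B).toNat (by omega)
  simp only [show (((n + B).toNat : ℕ) : ℤ) - B = n by omega] at h
  rw [h]
  refine sum_congr rfl fun t _ => ?_
  rw [sum_range_pow_smul_eq_zpow_smul_sum_Icc (Nat.cast_add_one_ne_zero _) B a, mul_smul]

end Extraction

def BandLimited {α : Type*} [Zero α] (B : ℕ) (f : ℤ → α) : Prop :=
  ∀ n : ℤ, (B : ℤ) < |n| → f n = 0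

namespace BandLimited

variable {α : Type*} [Zero α] {B : ℕ}

theorem apply {ι : Type*} {f : ℤ → ι → α} (hf : BandLimited B f) (i : ι) :
    BandLimited B fun n => f n i :=
  fun n hn => by simp [hf n hn]

theorem smul {R : Type*} [Zero R] [SMulWithZero R α] {f : ℤ → α} (hf : BandLimited B f)
    (r : ℤ → R) : BandLimited B fun n => r n • f n :=
  fun n hn => by simp [hf n hn]

theorem comp_add {f : ℤ → α} (hf : BandLimited B f) {M : ℕ} {p : ℤ} (hp : |p| ≤ M) :
    BandLimited (B + M) fun n => f (n + p) :=
  fun n hn => hf _ <| by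
    have h := abs_add_le (n + p) (-p)
    rw [add_neg_cancel_right, abs_neg] at h
    push_cast at hn
    linarith

theorem apply_eq_zero_of_notMem {f : ℤ → α} (hf : BandLimited B f) {n : ℤ}
    (hn : n ∉ Icc (-(B : ℤ)) B) : f n = 0 :=
  hf n (by rw [mem_Icc, ← abs_le] at hn; exact not_le.1 hn)

theorem finsum_eq_sum_Icc {V : Type*} [AddCommMonoid V] {f : ℤ → V} (hf : BandLimited B f) :
    ∑ᶠ n, f n = ∑ n ∈ Icc (-(B : ℤ)) B, f n :=
  finsum_eq_sum_of_support_subset f fun n hn => by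
    by_contra h; exact hn (hf.apply_eq_zero_of_notMem h)

variable {K V : Type*} [Field K] [AddCommGroup V] [Module K V]

theorem sum_Icc_zpow_add_smul {g : ℤ → V} (hg : BandLimited B g) {M : ℕ} {p : ℤ} (hp : |p| ≤ M)
    (x : K) :
    ∑ n ∈ Icc (-(B : ℤ)) B, x ^ (n + p) • g n
      = ∑ i ∈ Icc (-((B + M : ℕ) : ℤ)) (B + M : ℕ), x ^ i • g (i - p) := by
  have hshift : BandLimited (B + M) fun i => x ^ i • g (i - p) := by
    simpa [sub_eq_add_neg] using (hg.comp_add (p := -p) (by rwa [abs_neg])).smul (x ^ ·)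
  rw [← (hg.smul fun n => x ^ (n + p)).finsum_eq_sum_Icc, ← hshift.finsum_eq_sum_Icc,
    ← finsum_comp_equiv (Equiv.addRight p) (f := fun i => x ^ i • g (i - p))]
  simp

end BandLimited

section PolynomialFunctions

variable (V : Type*) [AddCommGroup V] [Module ℝ V]

def polyEval (d : ℕ) : (Fin (d + 1) → V) →ₗ[ℝ] ℤ → V where
  toFun a k := ∑ j : Fin (d + 1), (k : ℝ) ^ (j : ℕ) • a j
  map_add' a a' := by ext k; simp [sum_add_distrib]
  map_smul' r a := by ext k; simp [smul_sum, smul_comm r]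

def polyFun (d : ℕ) : Submodule ℝ (ℤ → V) := LinearMap.range (polyEval V d)

instance [FiniteDimensional ℝ V] (d : ℕ) : FiniteDimensional ℝ (polyFun V d) :=
  LinearMap.finiteDimensional_range _

variable {V}

theorem mem_polyFun_iff {d : ℕ} {f : ℤ → V} :
    f ∈ polyFun V d ↔ ∃ a : ℕ → V, ∀ k : ℤ, f k = ∑ j ∈ range (d + 1), (k : ℝ) ^ j • a j := by
  constructor
  · rintro ⟨a, rfl⟩
    refine ⟨fun j => if h : j < d + 1 then a ⟨j, h⟩ else 0, fun k => ?_⟩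
    rw [← Fin.sum_univ_eq_sum_range]
    simp [polyEval, Fin.is_le]
  · rintro ⟨a, ha⟩
    exact ⟨fun j => a j, funext fun k => by
      simp [polyEval, ha, Fin.sum_univ_eq_sum_range (fun j => (k : ℝ) ^ j • a j)]⟩

theorem polyEval_injective (d : ℕ) : Function.Injective (polyEval V d) := by
  refine (injective_iff_map_eq_zero _).2 fun a ha => funext fun j => ?_
  set P := Matrix.vandermonde fun t : Fin (d + 1) => ((t : ℕ) : ℝ) + 1
  have hP : IsUnit P.det :=
    isUnit_iff_ne_zero.2 <| Matrix.det_vandermonde_ne_zero_iff.2 fun s t h => by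
      simpa [Fin.ext_iff] using h
  rw [P.eq_sum_inv_smul_sum_smul hP a j]
  refine sum_eq_zero fun t _ => ?_
  have ht := congrFun ha ((t : ℕ) + 1 : ℤ)
  simp only [polyEval, LinearMap.coe_mk, AddHom.coe_mk, Pi.zero_apply] at ht
  push_cast at ht
  simp [P, ht]

theorem finrank_polyFun [FiniteDimensional ℝ V] (d : ℕ) :
    Module.finrank ℝ (polyFun V d) = (d + 1) * Module.finrank ℝ V := by
  rw [polyFun, ← (LinearEquiv.ofInjective _ (polyEval_injective d)).finrank_eq,
    Module.finrank_pi_fintype]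
  simp

theorem eval_smul_mem_polyFun {q : ℝ[X]} {d : ℕ} (hq : q.natDegree ≤ d) (v : V) :
    (fun k : ℤ => q.eval (k : ℝ) • v) ∈ polyFun V d := by
  refine mem_polyFun_iff.2 ⟨fun j => q.coeff j • v, fun k => ?_⟩
  rw [eval_eq_sum_range' (Nat.lt_succ_of_le hq), sum_smul]
  simp [smul_smul, mul_comm]

end PolynomialFunctions

section Intertwining

variable {V : Type*} [AddCommGroup V] [Module ℝ V]

/-- `P·Ψ = Ψ·b` for `Ψ(k, x) = xᵏ`, `P = ∑ₙ cₙ(k) S_kⁿ` and `b = ∑ₙ ∂ⁿ bₙ(x)`, on `x > 0`. -/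
def Intertwines (M : ℕ) (c : ℤ → ℤ → V) (b : ℕ → ℝ → V) : Prop :=
  ∀ (k : ℤ) (x : ℝ), 0 < x →
    (∑ᶠ n : ℤ, x ^ (k + n) • c n k) =
      ∑ n ∈ range (M + 1), iteratedDeriv n (fun y : ℝ => y ^ k) x • b n x

theorem intertwines_iff {B M : ℕ} {c : ℤ → ℤ → V} {b : ℕ → ℝ → V} (hc : BandLimited B c) :
    Intertwines M c b ↔ ∀ (k : ℤ) (x : ℝ), 0 < x →
      ∑ n ∈ Icc (-(B : ℤ)) B, x ^ n • c n k
        = ∑ p ∈ range (M + 1), ((descPochhammer ℝ p).eval (k : ℝ) * x ^ (-(p : ℤ))) • b p x := by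
  refine forall₂_congr fun k x => imp_congr_right fun hx => ?_
  have hshift :
      ∑ᶠ n : ℤ, x ^ (k + n) • c n k = x ^ k • ∑ n ∈ Icc (-(B : ℤ)) B, x ^ n • c n k := by
    rw [((hc.apply k).smul fun n => x ^ (k + n)).finsum_eq_sum_Icc, smul_sum]
    simp only [smul_smul, ← zpow_add₀ hx.ne']
  have hdiff : ∑ p ∈ range (M + 1), iteratedDeriv p (fun y : ℝ => y ^ k) x • b p x
      = x ^ k • ∑ p ∈ range (M + 1),
          ((descPochhammer ℝ p).eval (k : ℝ) * x ^ (-(p : ℤ))) • b p x := by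
    rw [smul_sum]
    refine sum_congr rfl fun p _ => ?_
    rw [iteratedDeriv_zpow, smul_smul, mul_left_comm, ← zpow_add₀ hx.ne', ← sub_eq_add_neg]
  rw [hshift, hdiff, (smul_right_injective V (zpow_ne_zero k hx.ne')).eq_iff]

theorem mem_polyFun_of_intertwines {B M : ℕ} {c : ℤ → ℤ → V} {b : ℕ → ℝ → V}
    (hc : BandLimited B c) (h : Intertwines M c b) (n : ℤ) : c n ∈ polyFun V M := by
  by_cases hn : n ∈ Icc (-(B : ℤ)) B
  swap
  · rw [hc.apply_eq_zero_of_notMem hn]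
    exact zero_mem _
  obtain ⟨w, hw⟩ := exists_eq_sum_smul_sum_zpow (K := ℝ) (V := V) B
  -- Extracting the `n`-th Laurent coefficient at finitely many points `x` exhibits `c n` as a
  -- fixed combination of the falling factorials `k ↦ (k)_p`, `p ≤ M`.
  have hcn : c n = ∑ t, w n t • ∑ p ∈ range (M + 1), fun k : ℤ =>
      (descPochhammer ℝ p).eval (k : ℝ) •
        ((((t : ℕ) : ℝ) + 1) ^ (-(p : ℤ)) • b p ((t : ℕ) + 1)) := by
    funext k
    rw [hw (fun i => c i k) n hn]
    simp only [Finset.sum_apply, Pi.smul_apply]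
    refine sum_congr rfl fun t _ => ?_
    rw [(intertwines_iff hc).1 h k _ (by positivity)]
    simp only [mul_smul]
  rw [hcn]
  exact sum_mem fun t _ => Submodule.smul_mem _ _ <| sum_mem fun p hp =>
    eval_smul_mem_polyFun ((descPochhammer_natDegree ℝ p).trans_le (mem_range_succ_iff.1 hp)) _

theorem exists_intertwines_of_mem_polyFun {B d : ℕ} {c : ℤ → ℤ → V} (hc : BandLimited B c)
    (hpoly : ∀ n, c n ∈ polyFun V d) : ∃ b : ℕ → ℝ → V, Intertwines d c b := by
  choose A hA using fun n => mem_polyFun_iff.1 (hpoly n)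
  refine ⟨fun p x => x ^ (p : ℤ) • ∑ n ∈ Icc (-(B : ℤ)) B, ∑ j ∈ range (d + 1),
      ((j.stirlingSecond p : ℝ) * x ^ n) • A n j, (intertwines_iff hc).2 fun k x hx => ?_⟩
  have hexpand (n : ℤ) : x ^ n • c n k = ∑ p ∈ range (d + 1), (descPochhammer ℝ p).eval (k : ℝ) •
      ∑ j ∈ range (d + 1), ((j.stirlingSecond p : ℝ) * x ^ n) • A n j := by
    rw [hA]
    simp only [smul_sum]
    rw [sum_comm]
    refine sum_congr rfl fun j hj => ?_
    rw [smul_smul, pow_eq_sum_stirlingSecond_mul_descPochhammer_eval _ (mem_range_succ_iff.1 hj),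
      mul_sum, sum_smul]
    exact sum_congr rfl fun p _ => by rw [smul_smul]; ring_nf
  rw [sum_congr rfl fun n _ => hexpand n, sum_comm]
  refine sum_congr rfl fun p _ => ?_
  rw [smul_smul, mul_assoc, ← zpow_add₀ hx.ne', neg_add_cancel, zpow_zero, mul_one, smul_sum]

end Intertwining

section Laurent

variable {V : Type*} [AddCommGroup V] [Module ℝ V]

def IsLaurentPoly (B : ℕ) (f : ℝ → V) : Prop :=
  ∃ a : ℤ → V, ∀ x : ℝ, 0 < x → f x = ∑ i ∈ Icc (-(B : ℤ)) B, x ^ i • a i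

theorem isLaurentPoly_of_intertwines {B M : ℕ} {c : ℤ → ℤ → V} {b : ℕ → ℝ → V}
    (hc : BandLimited B c) (h : Intertwines M c b) {p : ℕ} (hp : p ≤ M) :
    IsLaurentPoly (B + M) (b p) := by
  obtain ⟨u, hu⟩ := exists_eq_sum_smul_sum_descPochhammer (K := ℝ) (V := V) M
  refine ⟨fun i => ∑ t, u p t • c (i - p) t, fun x hx => ?_⟩
  -- Reading the intertwining relation at `k = 0, …, M` and inverting the triangular matrix
  -- `((t)_q)` isolates `x⁻ᵖ b_p(x)`.
  have hbp : x ^ (-(p : ℤ)) • b p x = ∑ t, u p t • ∑ n ∈ Icc (-(B : ℤ)) B, x ^ n • c n t := by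
    rw [hu (fun q => x ^ (-(q : ℤ)) • b q x) p hp]
    refine sum_congr rfl fun t _ => ?_
    rw [(intertwines_iff hc).1 h t x hx]
    simp only [Int.cast_natCast, mul_smul]
  calc b p x = x ^ (p : ℤ) • x ^ (-(p : ℤ)) • b p x := by
        rw [smul_smul, ← zpow_add₀ hx.ne', add_neg_cancel, zpow_zero, one_smul]
    _ = ∑ t, u p t • ∑ n ∈ Icc (-(B : ℤ)) B, x ^ (n + p) • c n t := by
        rw [hbp, smul_sum]
        refine sum_congr rfl fun t _ => ?_
        rw [smul_comm, smul_sum]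
        simp only [smul_smul, ← zpow_add₀ hx.ne', add_comm (p : ℤ)]
    _ = ∑ t, u p t • ∑ i ∈ Icc (-((B + M : ℕ) : ℤ)) (B + M : ℕ), x ^ i • c (i - p) t := by
        refine sum_congr rfl fun t _ => ?_
        rw [(hc.apply t).sum_Icc_zpow_add_smul (by simpa using hp)]
    _ = ∑ i ∈ Icc (-((B + M : ℕ) : ℤ)) (B + M : ℕ), x ^ i • ∑ t, u p t • c (i - p) t := by
        simp only [smul_sum]
        rw [sum_comm]
        exact sum_congr rfl fun i _ => sum_congr rfl fun t _ => smul_comm _ _ _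

theorem exists_intertwines_of_isLaurentPoly {B : ℕ} {b : ℕ → ℝ → V}
    (hb : ∀ p, IsLaurentPoly B (b p)) (M : ℕ) :
    ∃ c : ℤ → ℤ → V, BandLimited (B + M) c ∧ Intertwines M c b := by
  choose a ha using hb
  set a' : ℕ → ℤ → V := fun p i => if i ∈ Icc (-(B : ℤ)) B then a p i else 0
  have ha' (p : ℕ) : BandLimited B (a' p) := fun n hn =>
    if_neg (by rw [mem_Icc, ← abs_le]; exact not_le.2 hn)
  set c : ℤ → ℤ → V := fun n k =>
    ∑ p ∈ range (M + 1), (descPochhammer ℝ p).eval (k : ℝ) • a' p (n + p)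
  have hc : BandLimited (B + M) c := fun n hn => funext fun k => sum_eq_zero fun p hp => by
    rw [show a' p (n + p) = 0 from (ha' p).comp_add (by simpa using mem_range_succ_iff.1 hp) n hn,
      smul_zero]
  refine ⟨c, hc, (intertwines_iff hc).2 fun k x hx => ?_⟩
  calc ∑ n ∈ Icc (-((B + M : ℕ) : ℤ)) (B + M : ℕ), x ^ n • c n k
      = ∑ p ∈ range (M + 1), (descPochhammer ℝ p).eval (k : ℝ) •
          ∑ n ∈ Icc (-((B + M : ℕ) : ℤ)) (B + M : ℕ), x ^ n • a' p (n + p) := by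
        simp only [c, smul_sum]
        rw [sum_comm]
        exact sum_congr rfl fun p _ => sum_congr rfl fun n _ => smul_comm _ _ _
    _ = ∑ p ∈ range (M + 1), (descPochhammer ℝ p).eval (k : ℝ) •
          ∑ i ∈ Icc (-(B : ℤ)) B, x ^ (i + -p) • a p i := by
        refine sum_congr rfl fun p hp => ?_
        have hshift := (ha' p).sum_Icc_zpow_add_smul (M := M) (p := -p)
          (by simpa using mem_range_succ_iff.1 hp) x
        simp only [sub_neg_eq_add] at hshift
        rw [← hshift]
        exact congrArg _ (sum_congr rfl fun i hi => by simp only [a', if_pos hi])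
    _ = _ := by
        refine sum_congr rfl fun p _ => ?_
        rw [ha p x hx, smul_sum, smul_sum]
        refine sum_congr rfl fun i _ => ?_
        rw [smul_smul, smul_smul, mul_assoc, ← zpow_add₀ hx.ne', add_comm]

end Laurent

section Characterizations

variable {V : Type*} [AddCommGroup V] [Module ℝ V]

theorem exists_intertwines_iff_mem_polyFun {B M : ℕ} {c : ℤ → ℤ → V} (hc : BandLimited B c) :
    (∃ b, Intertwines M c b) ↔ ∀ n, c n ∈ polyFun V M :=
  ⟨fun ⟨_, h⟩ => mem_polyFun_of_intertwines hc h, exists_intertwines_of_mem_polyFun hc⟩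

theorem bandLimited_and_exists_intertwines_iff {c : ℤ → ℤ → V} :
    ((∃ B, BandLimited B c) ∧ ∃ M b, Intertwines M c b) ↔
      ∃ (B d : ℕ) (A : ℤ → ℕ → V), (∀ n : ℤ, (B : ℤ) < |n| → ∀ j, A n j = 0) ∧
        ∀ n k : ℤ, c n k = ∑ j ∈ range (d + 1), (k : ℝ) ^ j • A n j := by
  constructor
  · rintro ⟨⟨B, hc⟩, M, b, h⟩
    choose A hA using fun n => mem_polyFun_iff.1 (mem_polyFun_of_intertwines hc h n)
    refine ⟨B, M, fun n => if (B : ℤ) < |n| then 0 else A n, fun n hn j => by simp [hn],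
      fun n k => ?_⟩
    by_cases hn : (B : ℤ) < |n|
    · simp [hn, hc n hn]
    · simpa [hn] using hA n k
  · rintro ⟨B, d, A, hA, hcA⟩
    have hc : BandLimited B c := fun n hn => funext fun k => by simp [hcA, hA n hn]
    exact ⟨⟨B, hc⟩, d,
      exists_intertwines_of_mem_polyFun hc fun n => mem_polyFun_iff.2 ⟨A n, hcA n⟩⟩

theorem exists_intertwines_iff_isLaurentPoly {M : ℕ} {b : ℕ → ℝ → V}
    (hb : ∀ n, M < n → b n = 0) :
    (∃ c, (∃ B, BandLimited B c) ∧ Intertwines M c b) ↔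
      ∃ (B : ℕ) (A : ℕ → ℤ → V), ∀ (n : ℕ) (x : ℝ), 0 < x →
        b n x = ∑ i ∈ Icc (-(B : ℤ)) B, x ^ i • A n i := by
  constructor
  · rintro ⟨c, ⟨B, hc⟩, h⟩
    have hL (n : ℕ) : IsLaurentPoly (B + M) (b n) := by
      rcases le_or_gt n M with hn | hn
      · exact isLaurentPoly_of_intertwines hc h hn
      · exact ⟨0, fun x _ => by simp [hb n hn]⟩
    choose A hA using hL
    exact ⟨B + M, A, hA⟩
  · rintro ⟨B, A, hA⟩
    obtain ⟨c, hc, h⟩ := exists_intertwines_of_isLaurentPoly (fun n => ⟨A n, hA n⟩) M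
    exact ⟨c, ⟨B + M, hc⟩, h⟩

end Characterizations

section BandSubmodule

variable {R W : Type*} [Semiring R] [AddCommMonoid W] [Module R W]

def bandSubmodule (B : ℕ) (P : Submodule R W) : Submodule R (ℤ → W) where
  carrier := {f | BandLimited B f ∧ ∀ n, f n ∈ P}
  add_mem' := fun ⟨hf, hfP⟩ ⟨hg, hgP⟩ =>
    ⟨fun n hn => by simp [hf n hn, hg n hn], fun n => P.add_mem (hfP n) (hgP n)⟩
  zero_mem' := ⟨fun _ _ => rfl, fun _ => P.zero_mem⟩
  smul_mem' r _ := fun ⟨hf, hfP⟩ =>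
    ⟨fun n hn => by simp [hf n hn], fun n => P.smul_mem r (hfP n)⟩

noncomputable def bandSubmoduleEquiv (B : ℕ) (P : Submodule R W) :
    bandSubmodule B P ≃ₗ[R] (Icc (-(B : ℤ)) B → P) where
  toFun f i := ⟨f.1 i, f.2.2 i⟩
  invFun g := ⟨fun n => if h : n ∈ Icc (-(B : ℤ)) B then (g ⟨n, h⟩ : W) else 0,
    fun n hn => dif_neg (by rw [mem_Icc, ← abs_le]; exact not_le.2 hn),
    fun n => by dsimp only; split_ifs <;> simp⟩
  map_add' _ _ := rfl
  map_smul' _ _ := rfl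
  left_inv f := by
    ext n
    dsimp only
    split_ifs with h
    · rfl
    · exact (f.2.1.apply_eq_zero_of_notMem h).symm
  right_inv g := by ext i; simp

instance {K W : Type*} [Field K] [AddCommGroup W] [Module K W] (B : ℕ) (P : Submodule K W)
    [FiniteDimensional K P] : FiniteDimensional K (bandSubmodule B P) :=
  (bandSubmoduleEquiv B P).symm.finiteDimensional

theorem finrank_bandSubmodule {K W : Type*} [Field K] [AddCommGroup W] [Module K W] (B : ℕ)
    (P : Submodule K W) [FiniteDimensional K P] :
    Module.finrank K (bandSubmodule B P) = (2 * B + 1) * Module.finrank K P := by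
  rw [(bandSubmoduleEquiv B P).finrank_eq, Module.finrank_pi_fintype]
  simp only [sum_const, card_univ, Fintype.card_coe, Int.card_Icc, smul_eq_mul]
  congr 1
  omega

end BandSubmodule

theorem rAct_zpow (k : ℤ) : rAct (fun y : ℝ => y ^ k) = fun y => (k : ℝ) * y ^ k := by
  funext y
  simp only [rAct, deriv_zpow]
  rcases eq_or_ne y 0 with rfl | hy
  · rcases eq_or_ne k 0 with rfl | hk
    · simp
    · simp [_root_.zero_zpow _ hk]
  · rw [mul_assoc, ← zpow_add_one₀ hy, sub_add_cancel]

theorem rAct_const_mul (a : ℝ) (f : ℝ → ℝ) : rAct (fun y => a * f y) = fun y => a * rAct f y := by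
  funext y
  simp only [rAct, deriv_const_mul_field', mul_assoc]

theorem rAct_iterate_zpow (j : ℕ) (k : ℤ) :
    rAct^[j] (fun y : ℝ => y ^ k) = fun y => (k : ℝ) ^ j * y ^ k := by
  induction j with
  | zero => simp
  | succ j ih =>
    rw [Function.iterate_succ_apply', ih, rAct_const_mul, rAct_zpow]
    funext y
    ring

/-- for `Ψ(k,x) = x^k I_N` on `ℤ × (0,∞)`:
(1) the left Fourier algebra is `F_k(Ψ) = M_N(ℝ)[k, S_k^{±1}]`: a band-finite
shift operator with coefficients `c_n(k)` intertwines with some differential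
operator `∑ ∂^n b_n(x)` through `Ψ` iff all its coefficients are matrix
polynomials in `k`;
(2) the right Fourier algebra is `F_x(Ψ) = M_N(ℝ)[∂_x, x^{±1}]`: a
differential operator `∑_{n≤M} ∂^n b_n` is intertwined with some band-finite
shift operator iff its coefficients are matrix Laurent polynomials in `x`;
(3) `F_k^{2ℓ,2m}(Ψ)` (bandwidth `≤ 2ℓ`, co-order `≤ 2m`) is a submodule of
dimension `(2ℓ+1)(2m+1)N²`;
(4) the generalized Fourier map is determined by `b_Ψ(k^j S_k^i) = (∂_x x)^j x^i`
(together with `b_Ψ(A) = A` on matrices). -/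
theorem stmt13 (N ℓ m : ℕ) :
    (∀ c : ℤ → ℤ → Matrix (Fin N) (Fin N) ℝ,
      ((∃ Bd : ℕ, ∀ n : ℤ, (Bd : ℤ) < |n| → c n = 0) ∧
        ∃ (M : ℕ) (b : ℕ → ℝ → Matrix (Fin N) (Fin N) ℝ),
          ∀ (k : ℤ) (x : ℝ), 0 < x →
            (∑ᶠ n : ℤ, x ^ (k + n) • c n k) =
              ∑ n ∈ Finset.range (M + 1),
                iteratedDeriv n (fun y : ℝ => y ^ k) x • b n x)
      ↔ ∃ (Bd m' : ℕ) (A : ℤ → ℕ → Matrix (Fin N) (Fin N) ℝ),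
          (∀ n : ℤ, (Bd : ℤ) < |n| → ∀ j, A n j = 0) ∧
          ∀ (n : ℤ) (k : ℤ),
            c n k = ∑ j ∈ Finset.range (m' + 1), ((k : ℝ)) ^ j • A n j)
    ∧
    (∀ (b : ℕ → ℝ → Matrix (Fin N) (Fin N) ℝ) (M : ℕ), (∀ n, M < n → b n = 0) →
      ((∃ c : ℤ → ℤ → Matrix (Fin N) (Fin N) ℝ,
          (∃ Bd : ℕ, ∀ n : ℤ, (Bd : ℤ) < |n| → c n = 0) ∧
          ∀ (k : ℤ) (x : ℝ), 0 < x →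
            (∑ᶠ n : ℤ, x ^ (k + n) • c n k) =
              ∑ n ∈ Finset.range (M + 1),
                iteratedDeriv n (fun y : ℝ => y ^ k) x • b n x)
        ↔ ∃ (Bd : ℕ) (A : ℕ → ℤ → Matrix (Fin N) (Fin N) ℝ),
            ∀ (n : ℕ) (x : ℝ), 0 < x →
              b n x = ∑ i ∈ Finset.Icc (-(Bd : ℤ)) (Bd : ℤ), x ^ i • A n i))
    ∧
    (∃ S : Submodule ℝ (ℤ → ℤ → Matrix (Fin N) (Fin N) ℝ),
      (S : Set (ℤ → ℤ → Matrix (Fin N) (Fin N) ℝ)) =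
        {c | (∀ n : ℤ, (ℓ : ℤ) < |n| → c n = 0) ∧
          ∃ b : ℕ → ℝ → Matrix (Fin N) (Fin N) ℝ,
            ∀ (k : ℤ) (x : ℝ), 0 < x →
              (∑ᶠ n : ℤ, x ^ (k + n) • c n k) =
                ∑ n ∈ Finset.range (2 * m + 1),
                  iteratedDeriv n (fun y : ℝ => y ^ k) x • b n x} ∧
      Module.rank ℝ S = ((2 * ℓ + 1) * (2 * m + 1) * N ^ 2 : ℕ))
    ∧
    (∀ (j : ℕ) (i k : ℤ) (x : ℝ), 0 < x →
      rAct^[j] (fun y : ℝ => y ^ k) x * x ^ i = (k : ℝ) ^ j * x ^ (k + i)) := by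
  refine ⟨fun c => bandLimited_and_exists_intertwines_iff,
    fun b M hb => exists_intertwines_iff_isLaurentPoly hb, ?_, fun j i k x hx => ?_⟩
  · refine ⟨bandSubmodule ℓ (polyFun _ (2 * m)), ?_, ?_⟩
    · ext c
      exact and_congr_right fun hc => (exists_intertwines_iff_mem_polyFun hc).symm
    · rw [← Module.finrank_eq_rank, finrank_bandSubmodule, finrank_polyFun, Module.finrank_matrix]
      simp only [Fintype.card_fin, Module.finrank_self]
      ring_nf
  · rw [rAct_iterate_zpow, mul_assoc, ← zpow_add₀ hx.ne']
end

section
/- Let ψ(k,x) be the normalized Hermite discrete-continuous bispectral function, satisfying ψ·D = −2k ψ for D = ∂² − x² + 1 and L·ψ = ψ·x for L = √(k/2) S^{-1} + √((k+1)/2) S. Then for fixed t ∈ ℝ and n ≥ 0, the second-order differential operator R = ∂_x 2(x−t) ∂_x + 2(x−t)(1−x²) + 2(2n+1)x commutes with the integral operator T(f)(z) = ∫_{−∞}^t f(x) K(x,z) dx, where K(x,z) = Σ_{k=0}^n ψ(k,x) ψ(k,z); that is, T(f·R) = T(f)·R for all smooth compactly supported f on (−∞,t). -/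
open MeasureTheory

/-- The right action of the second order differential operator
`R = ∂_x 2(x−t) ∂_x + 2(x−t)(1−x²) + 2(2n+1)x` on scalar functions:
`f·R = (f'(x)·2(x−t))' + f(x)·(2(x−t)(1−x²) + 2(2n+1)x)`. -/
noncomputable def Ract (t : ℝ) (n : ℕ) (f : ℝ → ℝ) : ℝ → ℝ :=
  fun x => deriv (fun y => deriv f y * (2 * (y - t))) x
    + f x * (2 * (x - t) * (1 - x ^ 2) + 2 * (2 * (n : ℝ) + 1) * x)

noncomputable def hermc (k : ℕ) : ℝ :=
  (Real.sqrt (2 ^ k * (Nat.factorial k : ℝ) * Real.sqrt Real.pi))⁻¹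

lemma hermc_succ (k : ℕ) : hermc k = Real.sqrt (2 * ((k:ℝ) + 1)) * hermc (k + 1) := by
  unfold hermc
  have h1 : (2:ℝ) ^ (k+1) * (Nat.factorial (k+1) : ℝ) * Real.sqrt Real.pi
      = (2 * ((k:ℝ)+1)) * (2 ^ k * (Nat.factorial k : ℝ) * Real.sqrt Real.pi) := by
    push_cast [Nat.factorial_succ, pow_succ]
    ring
  rw [h1]
  generalize 2 ^ k * (Nat.factorial k : ℝ) * Real.sqrt Real.pi = A at h1 ⊢
  have hc : (0:ℝ) < 2 * ((k:ℝ)+1) := by positivity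
  generalize 2 * ((k:ℝ)+1) = c at hc ⊢
  rw [Real.sqrt_mul (by positivity), mul_inv, ← mul_assoc,
    mul_inv_cancel₀ (by positivity), one_mul]

lemma hermc_half (k : ℕ) :
    (1:ℝ)/2 * hermc k = Real.sqrt (((k:ℝ) + 1)/2) * hermc (k + 1) := by
  rw [hermc_succ k]
  have : Real.sqrt (2 * ((k:ℝ)+1)) = 2 * Real.sqrt (((k:ℝ)+1)/2) := by
    rw [show (2:ℝ) * ((k:ℝ)+1) = 2^2 * (((k:ℝ)+1)/2) by ring,
      Real.sqrt_mul (by positivity), Real.sqrt_sq (by norm_num)]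
  rw [this]; ring

lemma hermc_k (k : ℕ) :
    (k:ℝ) * hermc k = Real.sqrt ((k:ℝ)/2) * hermc (k - 1) := by
  cases k with
  | zero => simp
  | succ m =>
    have h0 := hermc_succ m
    simp only [Nat.add_sub_cancel]
    have h2 : Real.sqrt (((m:ℝ)+1)/2) * Real.sqrt (2 * ((m:ℝ)+1)) = (m:ℝ)+1 := by
      rw [← Real.sqrt_mul (by positivity),
        show ((m:ℝ)+1)/2 * (2*((m:ℝ)+1)) = ((m:ℝ)+1)^2 by ring]
      exact Real.sqrt_sq (by positivity)
    push_cast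
    rw [h0]
    linear_combination (-hermc (m+1)) * h2

section basics

lemma contDiff_deriv_top {f : ℝ → ℝ} (hf : ContDiff ℝ (⊤:ℕ∞) f) :
    ContDiff ℝ (⊤:ℕ∞) (deriv f) := by
  have := hf.iterate_deriv 1
  simpa using this

lemma hasDerivAt_deriv_of_contDiff {f : ℝ → ℝ} (hf : ContDiff ℝ (⊤:ℕ∞) f) (x : ℝ) :
    HasDerivAt (deriv f) (deriv (deriv f) x) x :=
  (((contDiff_deriv_top hf).differentiable (by simp)) x).hasDerivAt

lemma Ract_apply {f : ℝ → ℝ} (hf : ContDiff ℝ (⊤:ℕ∞) f) (t : ℝ) (n : ℕ) (x : ℝ) :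
    Ract t n f x = 2*(x-t)*deriv (deriv f) x + 2*deriv f x
      + f x * (2*(x-t)*(1-x^2) + 2*(2*(n:ℝ)+1)*x) := by
  unfold Ract
  have h2 : HasDerivAt (fun y : ℝ => 2*(y-t)) 2 x := by
    simpa using ((hasDerivAt_id x).sub_const t).const_mul (2:ℝ)
  have h1 : HasDerivAt (fun y => deriv f y * (2*(y-t)))
      (deriv (deriv f) x * (2*(x-t)) + deriv f x * 2) x :=
    (hasDerivAt_deriv_of_contDiff hf x).mul h2
  rw [h1.deriv]; ring

lemma Ract_contDiff {f : ℝ → ℝ} (hf : ContDiff ℝ (⊤:ℕ∞) f) (t : ℝ) (n : ℕ) :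
    ContDiff ℝ (⊤:ℕ∞) (Ract t n f) := by
  unfold Ract
  have hu : ContDiff ℝ (⊤:ℕ∞) (fun y => deriv f y * (2*(y-t))) :=
    (contDiff_deriv_top hf).mul (by fun_prop)
  exact (contDiff_deriv_top hu).add (hf.mul (by fun_prop))

lemma Ract_support {f : ℝ → ℝ} (t : ℝ) (n : ℕ) :
    Function.support (Ract t n f) ⊆ tsupport f := by
  intro x hx
  by_contra hmem
  apply hx
  have hf0 : f x = 0 := image_eq_zero_of_notMem_tsupport hmem
  have h1 : Function.support (fun y => deriv f y * (2*(y-t))) ⊆ tsupport f := by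
    intro y hy
    apply support_deriv_subset
    intro h0
    apply hy
    simp [h0]
  have h2 : tsupport (fun y => deriv f y * (2*(y-t))) ⊆ tsupport f :=
    closure_minimal h1 (isClosed_tsupport _)
  have hu : deriv (fun y => deriv f y * (2*(y-t))) x = 0 := by
    by_contra h
    exact hmem (h2 (support_deriv_subset (Function.mem_support.mpr h)))
  simp [Ract, hu, hf0]

lemma Ract_finset_sum (m : ℕ) (c : ℕ → ℝ) (φ : ℕ → ℝ → ℝ)
    (hφ : ∀ k, ContDiff ℝ (⊤:ℕ∞) (φ k)) (t : ℝ) (n : ℕ) (z : ℝ) :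
    Ract t n (fun w => ∑ k ∈ Finset.range m, c k * φ k w) z
      = ∑ k ∈ Finset.range m, c k * Ract t n (φ k) z := by
  have hdiff : ∀ (k : ℕ) (x : ℝ), DifferentiableAt ℝ (fun w => c k * φ k w) x :=
    fun k x => (contDiff_const.mul (hφ k)).differentiable (by simp) x
  have hd1 : deriv (fun w => ∑ k ∈ Finset.range m, c k * φ k w)
      = fun w => ∑ k ∈ Finset.range m, c k * deriv (φ k) w := by
    funext w
    rw [deriv_fun_sum (fun k _ => hdiff k w)]
    refine Finset.sum_congr rfl fun k _ => ?_
    exact deriv_const_mul (c k) ((hφ k).differentiable (by simp) w)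
  have hdiff' : ∀ (k : ℕ) (x : ℝ), DifferentiableAt ℝ (fun w => c k * deriv (φ k) w) x :=
    fun k x => (contDiff_const.mul (contDiff_deriv_top (hφ k))).differentiable
      (by simp) x
  have hd2 : deriv (deriv (fun w => ∑ k ∈ Finset.range m, c k * φ k w)) z
      = ∑ k ∈ Finset.range m, c k * deriv (deriv (φ k)) z := by
    rw [hd1, deriv_fun_sum (fun k _ => hdiff' k z)]
    refine Finset.sum_congr rfl fun k _ => ?_
    exact deriv_const_mul (c k) ((contDiff_deriv_top (hφ k)).differentiable (by simp) z)
  have hsum : ContDiff ℝ (⊤:ℕ∞) (fun w => ∑ k ∈ Finset.range m, c k * φ k w) :=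
    ContDiff.sum fun k _ => contDiff_const.mul (hφ k)
  rw [Ract_apply hsum, hd2, hd1]
  simp only [Ract_apply (hφ _)]
  rw [Finset.mul_sum, Finset.mul_sum, Finset.sum_mul, ← Finset.sum_add_distrib,
    ← Finset.sum_add_distrib]
  exact Finset.sum_congr rfl fun k _ => by ring

end basics

section herm
variable {H : ℕ → ℝ → ℝ} {ψ : ℕ → ℝ → ℝ}

lemma H_deriv (hsm : ∀ k, ContDiff ℝ (⊤ : ℕ∞) (H k)) (hH0 : ∀ x, H 0 x = 1)
    (hrec : ∀ (k : ℕ) (x : ℝ), H (k + 1) x = 2 * x * H k x - 2 * (k : ℝ) * H (k - 1) x) :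
    ∀ k, deriv (H k) = fun x => 2 * (k:ℝ) * H (k-1) x := by
  have hdH : ∀ (k : ℕ) (x : ℝ), HasDerivAt (H k) (deriv (H k) x) x := fun k x =>
    (((hsm k).of_le (by simp)).differentiable (by simp : ((⊤:ℕ∞):WithTop ℕ∞) ≠ 0) x).hasDerivAt
  intro k
  induction k using Nat.strong_induction_on with
  | _ k ih =>
    match k with
    | 0 =>
      have h : H 0 = fun _ => 1 := funext hH0
      rw [h]
      funext x
      simp
    | 1 =>
      have h : H 1 = fun x => 2 * x := by
        funext x
        rw [hrec 0 x, hH0]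
        push_cast
        ring
      rw [h]
      funext x
      have : deriv (fun x : ℝ => 2 * x) x = 2 := by
        simpa using ((hasDerivAt_id x).const_mul (2:ℝ)).deriv
      rw [this]
      simp [hH0]
    | (m+2) =>
      funext x
      have he : H (m+2) = fun x => 2 * x * H (m+1) x - 2 * ((m:ℝ)+1) * H m x := by
        funext y
        have := hrec (m+1) y
        push_cast at this
        simpa using this
      have h2x : HasDerivAt (fun y : ℝ => 2 * y) 2 x := by
        simpa using (hasDerivAt_id x).const_mul (2:ℝ)
      have hd : HasDerivAt (fun y => 2 * y * H (m+1) y - 2 * ((m:ℝ)+1) * H m y)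
          (2 * H (m+1) x + 2 * x * deriv (H (m+1)) x - 2 * ((m:ℝ)+1) * deriv (H m) x) x :=
        (h2x.mul (hdH (m+1) x)).sub ((hdH m x).const_mul _)
      rw [he, hd.deriv, ih (m+1) (by omega), ih m (by omega)]
      simp only [Nat.add_sub_cancel]
      push_cast
      linear_combination (-2*((m:ℝ)+1)) * hrec m x

lemma psi_eq (hψ : ∀ k x, ψ k x =
      (Real.sqrt (2 ^ k * (Nat.factorial k : ℝ) * Real.sqrt Real.pi))⁻¹ * H k x
        * Real.exp (-x ^ 2 / 2)) (k : ℕ) :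
    ψ k = fun x => hermc k * H k x * Real.exp (-x ^ 2 / 2) := by
  funext x
  rw [hψ k x]
  rfl

lemma psi_smooth (hsm : ∀ k, ContDiff ℝ (⊤ : ℕ∞) (H k))
    (hψ : ∀ k x, ψ k x =
      (Real.sqrt (2 ^ k * (Nat.factorial k : ℝ) * Real.sqrt Real.pi))⁻¹ * H k x
        * Real.exp (-x ^ 2 / 2)) (k : ℕ) :
    ContDiff ℝ (⊤:ℕ∞) (ψ k) := by
  rw [psi_eq hψ k]
  have hE : ContDiff ℝ (⊤:ℕ∞) (fun x : ℝ => Real.exp (-x ^ 2 / 2)) :=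
    (((contDiff_id.pow 2).neg).div_const 2).exp
  exact (contDiff_const.mul ((hsm k).of_le (by simp))).mul hE

lemma hasDerivAt_gauss (x : ℝ) :
    HasDerivAt (fun y : ℝ => Real.exp (-y ^ 2 / 2)) (-x * Real.exp (-x ^ 2 / 2)) x := by
  have h : HasDerivAt (fun y : ℝ => -y ^ 2 / 2) (-x) x := by
    have := ((hasDerivAt_pow 2 x).neg).div_const 2
    refine this.congr_deriv ?_
    push_cast
    ring
  simpa [mul_comm] using h.exp

lemma psi_hasDerivAt (hsm : ∀ k, ContDiff ℝ (⊤ : ℕ∞) (H k))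
    (hψ : ∀ k x, ψ k x =
      (Real.sqrt (2 ^ k * (Nat.factorial k : ℝ) * Real.sqrt Real.pi))⁻¹ * H k x
        * Real.exp (-x ^ 2 / 2)) (k : ℕ) (x : ℝ) :
    HasDerivAt (ψ k)
      (hermc k * (deriv (H k) x - x * H k x) * Real.exp (-x ^ 2 / 2)) x := by
  rw [psi_eq hψ k]
  have hdH : HasDerivAt (H k) (deriv (H k) x) x :=
    (((hsm k).of_le (by simp)).differentiable (by simp : ((⊤:ℕ∞):WithTop ℕ∞) ≠ 0) x).hasDerivAt
  have := (hdH.const_mul (hermc k)).mul (hasDerivAt_gauss x)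
  refine this.congr_deriv ?_
  ring

lemma psi_deriv (hsm : ∀ k, ContDiff ℝ (⊤ : ℕ∞) (H k)) (hH0 : ∀ x, H 0 x = 1)
    (hrec : ∀ (k : ℕ) (x : ℝ), H (k + 1) x = 2 * x * H k x - 2 * (k : ℝ) * H (k - 1) x)
    (hψ : ∀ k x, ψ k x =
      (Real.sqrt (2 ^ k * (Nat.factorial k : ℝ) * Real.sqrt Real.pi))⁻¹ * H k x
        * Real.exp (-x ^ 2 / 2)) (k : ℕ) (x : ℝ) :
    deriv (ψ k) x = 2 * Real.sqrt ((k:ℝ)/2) * ψ (k-1) x - x * ψ k x := by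
  rw [(psi_hasDerivAt hsm hψ k x).deriv, H_deriv hsm hH0 hrec k]
  simp only [psi_eq hψ]
  linear_combination (2 * H (k-1) x * Real.exp (-x ^ 2 / 2)) * hermc_k k

lemma psi_deriv2 (hsm : ∀ k, ContDiff ℝ (⊤ : ℕ∞) (H k))
    (hODE : ∀ (k : ℕ) (x : ℝ),
      deriv (deriv (H k)) x - 2 * x * deriv (H k) x = -2 * (k : ℝ) * H k x)
    (hψ : ∀ k x, ψ k x =
      (Real.sqrt (2 ^ k * (Nat.factorial k : ℝ) * Real.sqrt Real.pi))⁻¹ * H k x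
        * Real.exp (-x ^ 2 / 2)) (k : ℕ) (x : ℝ) :
    deriv (deriv (ψ k)) x = (x^2 - 1 - 2*(k:ℝ)) * ψ k x := by
  have hd1 : deriv (ψ k) = fun x =>
      hermc k * (deriv (H k) x - x * H k x) * Real.exp (-x ^ 2 / 2) :=
    funext fun x => (psi_hasDerivAt hsm hψ k x).deriv
  have hdH : ∀ y, HasDerivAt (H k) (deriv (H k) y) y := fun y =>
    (((hsm k).of_le (by simp)).differentiable (by simp : ((⊤:ℕ∞):WithTop ℕ∞) ≠ 0) y).hasDerivAt
  have hdH2 : HasDerivAt (deriv (H k)) (deriv (deriv (H k)) x) x :=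
    hasDerivAt_deriv_of_contDiff ((hsm k).of_le (by simp)) x
  have hG : HasDerivAt (fun y => hermc k * (deriv (H k) y - y * H k y))
      (hermc k * (deriv (deriv (H k)) x - (H k x + x * deriv (H k) x))) x := by
    have hx : HasDerivAt (fun y : ℝ => y * H k y) (1 * H k x + x * deriv (H k) x) x :=
      (hasDerivAt_id x).mul (hdH x)
    have := (hdH2.sub hx).const_mul (hermc k)
    refine this.congr_deriv ?_
    ring
  have hd2 : HasDerivAt (deriv (ψ k))
      (hermc k * (deriv (deriv (H k)) x - (H k x + x * deriv (H k) x)) * Real.exp (-x^2/2)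
        + hermc k * (deriv (H k) x - x * H k x) * (-x * Real.exp (-x^2/2))) x := by
    rw [hd1]
    exact hG.mul (hasDerivAt_gauss x)
  rw [hd2.deriv]
  simp only [psi_eq hψ]
  linear_combination (hermc k * Real.exp (-x ^ 2 / 2)) * hODE k x

lemma psi_x (hH0 : ∀ x, H 0 x = 1)
    (hrec : ∀ (k : ℕ) (x : ℝ), H (k + 1) x = 2 * x * H k x - 2 * (k : ℝ) * H (k - 1) x)
    (hψ : ∀ k x, ψ k x =
      (Real.sqrt (2 ^ k * (Nat.factorial k : ℝ) * Real.sqrt Real.pi))⁻¹ * H k x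
        * Real.exp (-x ^ 2 / 2)) (k : ℕ) (x : ℝ) :
    x * ψ k x = Real.sqrt ((k:ℝ)/2) * ψ (k-1) x
      + Real.sqrt (((k:ℝ)+1)/2) * ψ (k+1) x := by
  simp only [psi_eq hψ]
  linear_combination (-(hermc k * Real.exp (-x ^ 2 / 2))/2) * hrec k x
    + (H (k+1) x * Real.exp (-x ^ 2 / 2)) * hermc_half k
    + (H (k-1) x * Real.exp (-x ^ 2 / 2)) * hermc_k k

lemma Ract_psi (hsm : ∀ k, ContDiff ℝ (⊤ : ℕ∞) (H k)) (hH0 : ∀ x, H 0 x = 1)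
    (hrec : ∀ (k : ℕ) (x : ℝ), H (k + 1) x = 2 * x * H k x - 2 * (k : ℝ) * H (k - 1) x)
    (hODE : ∀ (k : ℕ) (x : ℝ),
      deriv (deriv (H k)) x - 2 * x * deriv (H k) x = -2 * (k : ℝ) * H k x)
    (hψ : ∀ k x, ψ k x =
      (Real.sqrt (2 ^ k * (Nat.factorial k : ℝ) * Real.sqrt Real.pi))⁻¹ * H k x
        * Real.exp (-x ^ 2 / 2)) (t : ℝ) (n k : ℕ) (x : ℝ) :
    Ract t n (ψ k) x
      = (4*((n:ℝ)+1-(k:ℝ))*Real.sqrt ((k:ℝ)/2)) * ψ (k-1) x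
        + 4*(k:ℝ)*t * ψ k x
        + (4*((n:ℝ)-(k:ℝ))*Real.sqrt (((k:ℝ)+1)/2)) * ψ (k+1) x := by
  rw [Ract_apply (psi_smooth hsm hψ k), psi_deriv2 hsm hODE hψ k x,
    psi_deriv hsm hH0 hrec hψ k x]
  linear_combination (4*((n:ℝ)-(k:ℝ))) * psi_x hH0 hrec hψ k x

end herm

lemma Ract_symm {f g : ℝ → ℝ} (hf : ContDiff ℝ (⊤:ℕ∞) f) (hg : ContDiff ℝ (⊤:ℕ∞) g)
    (hcf : HasCompactSupport f) (t : ℝ) (n : ℕ) :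
    ∫ x in Set.Iio t, Ract t n f x * g x = ∫ x in Set.Iio t, f x * Ract t n g x := by
  set W : ℝ → ℝ := fun x => 2*(x-t) * (deriv f x * g x - f x * deriv g x) with hWdef
  have hdf := contDiff_deriv_top hf
  have hdg := contDiff_deriv_top hg
  have hW : ContDiff ℝ (⊤:ℕ∞) W :=
    (by fun_prop : ContDiff ℝ (⊤:ℕ∞) (fun x : ℝ => 2*(x-t))).mul
      ((hdf.mul hg).sub (hf.mul hdg))
  have hWcs : HasCompactSupport W := by
    apply HasCompactSupport.intro hcf
    intro x hx
    have h1 : f x = 0 := image_eq_zero_of_notMem_tsupport hx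
    have h2 : deriv f x = 0 := by
      by_contra h
      exact hx (support_deriv_subset (Function.mem_support.mpr h))
    simp [hWdef, h1, h2]
  have hderivW : ∀ x, deriv W x = Ract t n f x * g x - f x * Ract t n g x := by
    intro x
    have h2x : HasDerivAt (fun y : ℝ => 2*(y-t)) 2 x := by
      simpa using ((hasDerivAt_id x).sub_const t).const_mul (2:ℝ)
    have hin : HasDerivAt (fun y => deriv f y * g y - f y * deriv g y)
        ((deriv (deriv f) x * g x + deriv f x * deriv g x)
          - (deriv f x * deriv g x + f x * deriv (deriv g) x)) x :=
      ((hasDerivAt_deriv_of_contDiff hf x).mul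
          ((hg.differentiable (by simp) x).hasDerivAt)).sub
        (((hf.differentiable (by simp) x).hasDerivAt).mul
          (hasDerivAt_deriv_of_contDiff hg x))
    have hWd : HasDerivAt W
        (2 * (deriv f x * g x - f x * deriv g x)
          + 2*(x-t) * ((deriv (deriv f) x * g x + deriv f x * deriv g x)
            - (deriv f x * deriv g x + f x * deriv (deriv g) x))) x :=
      h2x.mul hin
    rw [hWd.deriv, Ract_apply hf, Ract_apply hg]
    ring
  have hint1 : IntegrableOn (fun x => Ract t n f x * g x) (Set.Iio t) := by
    apply Integrable.integrableOn
    apply Continuous.integrable_of_hasCompactSupport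
    · exact ((Ract_contDiff hf t n).continuous).mul hg.continuous
    · apply HasCompactSupport.intro hcf
      intro x hx
      have : Ract t n f x = 0 := by
        by_contra h
        exact hx (Ract_support t n (Function.mem_support.mpr h))
      simp [this]
  have hint2 : IntegrableOn (fun x => f x * Ract t n g x) (Set.Iio t) := by
    apply Integrable.integrableOn
    apply Continuous.integrable_of_hasCompactSupport
    · exact hf.continuous.mul ((Ract_contDiff hg t n).continuous)
    · apply HasCompactSupport.intro hcf
      intro x hx
      simp [image_eq_zero_of_notMem_tsupport hx]
  rw [← sub_eq_zero, ← MeasureTheory.integral_sub hint1 hint2]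
  have : ∀ x, Ract t n f x * g x - f x * Ract t n g x = deriv W x :=
    fun x => (hderivW x).symm
  rw [MeasureTheory.integral_congr_ae (Filter.Eventually.of_forall this),
    ← MeasureTheory.integral_Iic_eq_integral_Iio,
    HasCompactSupport.integral_Iic_deriv_eq (hW.of_le (mod_cast le_top)) hWcs t]
  simp [hWdef]

lemma sum_shift (n : ℕ) (c p a b d : ℕ → ℝ)
    (hab : ∀ k, b k = a (k+1)) (ha0 : a 0 = 0) (han : a (n+1) = 0) :
    ∑ k ∈ Finset.range (n+1), (a k * c (k-1) + d k * c k + b k * c (k+1)) * p k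
      = ∑ k ∈ Finset.range (n+1),
          c k * (a k * p (k-1) + d k * p k + b k * p (k+1)) := by
  have h1 : ∑ k ∈ Finset.range (n+1), a k * c (k-1) * p k
      = ∑ k ∈ Finset.range (n+1), c k * (b k * p (k+1)) := by
    rw [Finset.sum_range_succ' (fun k => a k * c (k-1) * p k) n, Finset.sum_range_succ]
    simp only [Nat.add_sub_cancel, hab, ha0, han, zero_mul, mul_zero, add_zero]
    exact Finset.sum_congr rfl fun i _ => by ring
  have h2 : ∑ k ∈ Finset.range (n+1), b k * c (k+1) * p k
      = ∑ k ∈ Finset.range (n+1), c k * (a k * p (k-1)) := by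
    rw [Finset.sum_range_succ' (fun k => c k * (a k * p (k-1))) n, Finset.sum_range_succ]
    simp only [Nat.add_sub_cancel, hab, ha0, han, zero_mul, mul_zero, add_zero]
    exact Finset.sum_congr rfl fun i _ => by ring
  have expand : ∀ k, (a k * c (k-1) + d k * c k + b k * c (k+1)) * p k
      = a k * c (k-1) * p k + d k * c k * p k + b k * c (k+1) * p k := fun k => by ring
  have expand2 : ∀ k, c k * (a k * p (k-1) + d k * p k + b k * p (k+1))
      = c k * (a k * p (k-1)) + d k * c k * p k + c k * (b k * p (k+1)) := fun k => by ring
  simp only [expand, expand2, Finset.sum_add_distrib]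
  rw [h1, h2]
  ring

/-- let `ψ(k,x) = (2^k k! √π)^{-1/2} H_k(x) e^{−x²/2}` be the
orthonormal Hermite functions (`H_k` the physicists' Hermite polynomials,
characterized by `H_0 = 1` and `H_{k+1} = 2x H_k − 2k H_{k−1}`, satisfying
`H_k'' − 2x H_k' = −2k H_k`).  Then for fixed `t ∈ ℝ` and `n ≥ 0`, the
second order differential operator `R = ∂ 2(x−t) ∂ + 2(x−t)(1−x²) + 2(2n+1)x`
commutes with the integral operator
`T(f)(z) = ∫_{−∞}^t f(x) K(x,z) dx`, `K(x,z) = ∑_{k=0}^n ψ(k,x) ψ(k,z)`: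
`T(f·R) = T(f)·R` for all smooth compactly supported `f` on `(−∞,t)`. -/
theorem stmt15 (H : ℕ → ℝ → ℝ)
    (hsm : ∀ k, ContDiff ℝ (⊤ : ℕ∞) (H k))
    (hH0 : ∀ x, H 0 x = 1)
    (hrec : ∀ (k : ℕ) (x : ℝ), H (k + 1) x = 2 * x * H k x - 2 * (k : ℝ) * H (k - 1) x)
    (hODE : ∀ (k : ℕ) (x : ℝ),
      deriv (deriv (H k)) x - 2 * x * deriv (H k) x = -2 * (k : ℝ) * H k x)
    (ψ : ℕ → ℝ → ℝ)
    (hψ : ∀ k x, ψ k x =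
      (Real.sqrt (2 ^ k * (Nat.factorial k : ℝ) * Real.sqrt Real.pi))⁻¹ * H k x
        * Real.exp (-x ^ 2 / 2))
    (t : ℝ) (n : ℕ) :
    ∀ f : ℝ → ℝ, ContDiff ℝ (⊤ : ℕ∞) f → HasCompactSupport f → tsupport f ⊆ Set.Iio t →
      ∀ z : ℝ,
        (∫ x in Set.Iio t, Ract t n f x * ∑ k ∈ Finset.range (n + 1), ψ k x * ψ k z)
          = Ract t n
              (fun w => ∫ x in Set.Iio t,
                f x * ∑ k ∈ Finset.range (n + 1), ψ k x * ψ k w) z := by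
  intro f hfsm hfcs _hfsupp z
  have hfsm' : ContDiff ℝ (⊤:ℕ∞) f := hfsm.of_le (by simp)
  have Ψsm : ∀ k, ContDiff ℝ (⊤:ℕ∞) (ψ k) := psi_smooth hsm hψ
  set c : ℕ → ℝ := fun k => ∫ x in Set.Iio t, f x * ψ k x with hc
  set a : ℕ → ℝ := fun j => 4*((n:ℝ)+1-(j:ℝ))*Real.sqrt ((j:ℝ)/2) with ha
  set b : ℕ → ℝ := fun j => 4*((n:ℝ)-(j:ℝ))*Real.sqrt (((j:ℝ)+1)/2) with hb
  set d : ℕ → ℝ := fun j => 4*(j:ℝ)*t with hd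
  -- integrability of f times continuous
  have hfint : ∀ g : ℝ → ℝ, Continuous g →
      IntegrableOn (fun x => f x * g x) (Set.Iio t) := by
    intro g hgc
    apply Integrable.integrableOn
    apply Continuous.integrable_of_hasCompactSupport (hfsm.continuous.mul hgc)
    apply HasCompactSupport.intro hfcs
    intro x hx
    simp [image_eq_zero_of_notMem_tsupport hx]
  have hRint : ∀ g : ℝ → ℝ, Continuous g →
      IntegrableOn (fun x => Ract t n f x * g x) (Set.Iio t) := by
    intro g hgc
    apply Integrable.integrableOn
    apply Continuous.integrable_of_hasCompactSupport
      (((Ract_contDiff hfsm' t n).continuous).mul hgc)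
    apply HasCompactSupport.intro hfcs
    intro x hx
    have : Ract t n f x = 0 := by
      by_contra h
      exact hx (Ract_support t n (Function.mem_support.mpr h))
    simp [this]
  -- rewrite RHS inner function as finite linear combination
  have hg : (fun w => ∫ x in Set.Iio t,
        f x * ∑ k ∈ Finset.range (n + 1), ψ k x * ψ k w)
      = fun w => ∑ k ∈ Finset.range (n + 1), c k * ψ k w := by
    funext w
    have h1 : ∀ x : ℝ, f x * ∑ k ∈ Finset.range (n + 1), ψ k x * ψ k w
        = ∑ k ∈ Finset.range (n + 1), (fun x => (f x * ψ k x) * ψ k w) x := by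
      intro x
      rw [Finset.mul_sum]
      exact Finset.sum_congr rfl fun k _ => by ring
    simp only [h1]
    rw [MeasureTheory.integral_finset_sum _ (fun k _ =>
      ((hfint (ψ k) (Ψsm k).continuous).mul_const (ψ k w)))]
    exact Finset.sum_congr rfl fun k _ => by
      rw [MeasureTheory.integral_mul_const]
  rw [hg, Ract_finset_sum (n+1) c ψ Ψsm t n z]
  -- rewrite LHS
  have h2 : ∀ x : ℝ, Ract t n f x * ∑ k ∈ Finset.range (n + 1), ψ k x * ψ k z
      = ∑ k ∈ Finset.range (n + 1), (fun x => (Ract t n f x * ψ k x) * ψ k z) x := by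
    intro x
    rw [Finset.mul_sum]
    exact Finset.sum_congr rfl fun k _ => by ring
  simp only [h2]
  rw [MeasureTheory.integral_finset_sum _ (fun k _ =>
    ((hRint (ψ k) (Ψsm k).continuous).mul_const (ψ k z)))]
  -- per-k evaluation of both sides
  have hRψ : ∀ k x, Ract t n (ψ k) x
      = a k * ψ (k-1) x + d k * ψ k x + b k * ψ (k+1) x := by
    intro k x
    rw [Ract_psi hsm hH0 hrec hODE hψ t n k x, ha, hb, hd]
  have hLk : ∀ k, (∫ x in Set.Iio t, (Ract t n f x * ψ k x) * ψ k z)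
      = (a k * c (k-1) + d k * c k + b k * c (k+1)) * ψ k z := by
    intro k
    rw [MeasureTheory.integral_mul_const]
    congr 1
    rw [Ract_symm hfsm' (Ψsm k) hfcs t n]
    have h3 : ∀ x : ℝ, f x * Ract t n (ψ k) x
        = a k * (f x * ψ (k-1) x) + d k * (f x * ψ k x) + b k * (f x * ψ (k+1) x) := by
      intro x
      rw [hRψ k x]
      ring
    simp only [h3]
    have i1 : IntegrableOn (fun x => a k * (f x * ψ (k-1) x)) (Set.Iio t) :=
      (hfint _ (Ψsm (k-1)).continuous).const_mul (a k)
    have i2 : IntegrableOn (fun x => d k * (f x * ψ k x)) (Set.Iio t) :=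
      (hfint _ (Ψsm k).continuous).const_mul (d k)
    have i3 : IntegrableOn (fun x => b k * (f x * ψ (k+1) x)) (Set.Iio t) :=
      (hfint _ (Ψsm (k+1)).continuous).const_mul (b k)
    have i12 : IntegrableOn
        (fun x => a k * (f x * ψ (k-1) x) + d k * (f x * ψ k x)) (Set.Iio t) := i1.add i2
    rw [MeasureTheory.integral_add i12 i3, MeasureTheory.integral_add i1 i2,
      MeasureTheory.integral_const_mul, MeasureTheory.integral_const_mul,
      MeasureTheory.integral_const_mul]
  simp only [hLk]
  have hRk : ∀ k, c k * Ract t n (ψ k) z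
      = c k * (a k * ψ (k-1) z + d k * ψ k z + b k * ψ (k+1) z) := fun k => by
    rw [hRψ k z]
  simp only [hRk]
  apply sum_shift n c (fun k => ψ k z) a b d
  · intro k
    rw [ha, hb]
    push_cast
    ring
  · simp [ha]
  · simp [ha]
end

section
/- Let A be an r×r real symmetric matrix and let U(x,∂) be the 2r×2r matrix differential operator U = [[(∂+x)I, −A],[−A, (∂−x)I]]. Then U U* = [[−D I + A², 0],[0, −D I + A² + 2I]], where D = ∂² − x² + 1 and * is the formal adjoint ((∂^n B)* = (−1)^n B* ∂^n). -/
open Matrix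
open scoped ContDiff

/-- Entrywise derivative of a matrix valued function. -/
noncomputable def mderiv {m : Type*} (F : ℝ → Matrix m m ℝ) : ℝ → Matrix m m ℝ :=
  fun x => Matrix.of fun i j => deriv (fun y => F y i j) x

/-- The matrix valued coefficient `V(x) = [[x I, −A], [−A, −x I]]` of
`U = ∂ I + V(x)`, i.e. `U = [[(∂+x)I, −A],[−A, (∂−x)I]]`. -/
noncomputable def Vmat {r : ℕ} (A : Matrix (Fin r) (Fin r) ℝ) (y : ℝ) :
    Matrix (Fin r ⊕ Fin r) (Fin r ⊕ Fin r) ℝ :=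
  Matrix.fromBlocks (y • 1) (-A) (-A) (-(y • 1))

/-- Right action of `U = ∂ I + V(x)`: `F·U = F' + F V`. -/
noncomputable def Uact {r : ℕ} (A : Matrix (Fin r) (Fin r) ℝ)
    (F : ℝ → Matrix (Fin r ⊕ Fin r) (Fin r ⊕ Fin r) ℝ) :
    ℝ → Matrix (Fin r ⊕ Fin r) (Fin r ⊕ Fin r) ℝ :=
  fun x => mderiv F x + F x * Vmat A x

/-- Right action of the formal adjoint `U* = −I ∂ + V(x)ᵀ = −I ∂ + V(x)`
(for symmetric `A`): `F·U* = −F' + F V`. -/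
noncomputable def UstarAct {r : ℕ} (A : Matrix (Fin r) (Fin r) ℝ)
    (F : ℝ → Matrix (Fin r ⊕ Fin r) (Fin r ⊕ Fin r) ℝ) :
    ℝ → Matrix (Fin r ⊕ Fin r) (Fin r ⊕ Fin r) ℝ :=
  fun x => -mderiv F x + F x * Vmat A x

/-- Each entry of `Vmat A` is an affine function of the variable. -/
lemma vmat_entry {r : ℕ} (A : Matrix (Fin r) (Fin r) ℝ) (k j) :
    (fun y => Vmat A y k j) =
      fun y => (Matrix.fromBlocks (1 : Matrix (Fin r) (Fin r) ℝ) 0 0 (-1)) k j * y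
        + (Matrix.fromBlocks 0 (-A) (-A) 0) k j := by
  funext y
  cases k <;> cases j <;>
    simp [Vmat, Matrix.one_apply, Matrix.smul_apply, mul_comm]

lemma vmat_hasDerivAt {r : ℕ} (A : Matrix (Fin r) (Fin r) ℝ) (k j) (x : ℝ) :
    HasDerivAt (fun y => Vmat A y k j)
      ((Matrix.fromBlocks (1 : Matrix (Fin r) (Fin r) ℝ) 0 0 (-1)) k j) x := by
  rw [vmat_entry]
  simpa using (((hasDerivAt_id x).const_mul
    ((Matrix.fromBlocks (1 : Matrix (Fin r) (Fin r) ℝ) 0 0 (-1)) k j)).add_const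
    ((Matrix.fromBlocks 0 (-A) (-A) 0) k j))

lemma vmat_diff {r : ℕ} (A : Matrix (Fin r) (Fin r) ℝ) (k j) (x : ℝ) :
    DifferentiableAt ℝ (fun y => Vmat A y k j) x :=
  (vmat_hasDerivAt A k j x).differentiableAt

lemma mderiv_vmat {r : ℕ} (A : Matrix (Fin r) (Fin r) ℝ) (x : ℝ) :
    mderiv (Vmat A) x = Matrix.fromBlocks 1 0 0 (-1) := by
  ext k j
  exact (vmat_hasDerivAt A k j x).deriv

/-- Entrywise product rule for `F ↦ F * Vmat A`. -/
lemma mderiv_mulV {r : ℕ} (A : Matrix (Fin r) (Fin r) ℝ)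
    (F : ℝ → Matrix (Fin r ⊕ Fin r) (Fin r ⊕ Fin r) ℝ) (x : ℝ)
    (hF : ∀ i j, DifferentiableAt ℝ (fun y => F y i j) x) :
    mderiv (fun y => F y * Vmat A y) x = mderiv F x * Vmat A x + F x * mderiv (Vmat A) x := by
  ext i j
  simp only [mderiv, Matrix.of_apply, Matrix.add_apply, Matrix.mul_apply]
  rw [deriv_fun_sum fun k _ => (hF i k).fun_mul (vmat_diff A k j x), ← Finset.sum_add_distrib]
  exact Finset.sum_congr rfl fun k _ => by
    rw [deriv_fun_mul (hF i k) (vmat_diff A k j x)]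

lemma mulV_entry_diff {r : ℕ} (A : Matrix (Fin r) (Fin r) ℝ)
    (F : ℝ → Matrix (Fin r ⊕ Fin r) (Fin r ⊕ Fin r) ℝ) (x : ℝ)
    (hF : ∀ i j, DifferentiableAt ℝ (fun y => F y i j) x) (i j) :
    DifferentiableAt ℝ (fun y => (F y * Vmat A y) i j) x := by
  have : (fun y => (F y * Vmat A y) i j) = fun y => ∑ k, F y i k * Vmat A y k j := by
    funext y; exact Matrix.mul_apply
  rw [this]
  exact DifferentiableAt.fun_sum fun k _ => (hF i k).fun_mul (vmat_diff A k j x)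

lemma vmat_sq {r : ℕ} (A : Matrix (Fin r) (Fin r) ℝ) (x : ℝ) :
    Vmat A x * Vmat A x = fromBlocks ((x^2) • 1 + A*A) 0 0 ((x^2) • 1 + A*A) := by
  simp [Vmat, Matrix.fromBlocks_multiply, smul_smul, pow_two, smul_mul_assoc, mul_smul_comm,
    add_comm]

lemma vmat_sq_sub {r : ℕ} (A : Matrix (Fin r) (Fin r) ℝ) (x : ℝ) :
    Vmat A x * Vmat A x - fromBlocks 1 0 0 (-1)
      = (x ^ 2 - 1) • 1 + fromBlocks (A * A) 0 0 (A * A + (2 : ℝ) • 1) := by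
  rw [vmat_sq]
  ext i j
  cases i <;> cases j <;>
    simp [Matrix.fromBlocks, Matrix.one_apply, sub_smul, Matrix.smul_apply, Matrix.sub_apply,
      Matrix.add_apply] <;> split <;> ring

/-- for a symmetric `r×r` matrix `A` and the `2r×2r` matrix
differential operator `U = [[(∂+x)I, −A],[−A, (∂−x)I]]`, one has
`U U* = [[−D I + A², 0],[0, −D I + A² + 2I]]` with `D = ∂² − x² + 1`,
expressed through the right action on smooth matrix valued functions:
`F·(U U*) = −F'' + (x²−1) F + F · diag(A², A² + 2I)`. -/
theorem stmt16 (r : ℕ) (A : Matrix (Fin r) (Fin r) ℝ) (hA : Aᵀ = A)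
    (F : ℝ → Matrix (Fin r ⊕ Fin r) (Fin r ⊕ Fin r) ℝ)
    (hF : ∀ i j, ContDiff ℝ (⊤ : ℕ∞) fun x => F x i j) (x : ℝ) :
    UstarAct A (Uact A F) x =
      -mderiv (mderiv F) x + (x ^ 2 - 1) • F x
        + F x * Matrix.fromBlocks (A * A) 0 0 (A * A + (2 : ℝ) • 1) := by
  have hFinf : ∀ i j, ContDiff ℝ ∞ fun y => F y i j := fun i j => (hF i j).of_le (by simp)
  have hFd : ∀ i j, DifferentiableAt ℝ (fun y => F y i j) x := fun i j =>
    ((hFinf i j).differentiable (by simp)).differentiableAt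
  have hFd' : ∀ i j, DifferentiableAt ℝ (fun y => mderiv F y i j) x := by
    intro i j
    have h2 := (contDiff_infty_iff_deriv.mp (hFinf i j)).2
    have : (fun y => mderiv F y i j) = deriv (fun y => F y i j) := rfl
    rw [this]
    exact (h2.differentiable (by simp)).differentiableAt
  set W : Matrix (Fin r ⊕ Fin r) (Fin r ⊕ Fin r) ℝ := fromBlocks 1 0 0 (-1) with hW
  -- derivative of Uact A F at x
  have key : mderiv (Uact A F) x =
      mderiv (mderiv F) x + (mderiv F x * Vmat A x + F x * W) := by
    have hprod := mderiv_mulV A F x hFd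
    rw [mderiv_vmat] at hprod
    ext i j
    simp only [mderiv, Matrix.of_apply, Matrix.add_apply]
    have heq : (fun y => Uact A F y i j)
        = fun y => mderiv F y i j + (fun y => F y * Vmat A y) y i j := rfl
    rw [heq, deriv_fun_add (hFd' i j) (mulV_entry_diff A F x hFd i j)]
    have h2 : deriv (fun y => (fun y => F y * Vmat A y) y i j) x
        = (mderiv F x * Vmat A x + F x * W) i j := by
      have := congrFun (congrFun (congrArg Matrix.of.symm hprod) i) j
      simpa [mderiv] using this
    rw [h2]
    simp [mderiv]
  -- now the algebraic part
  have hU : Uact A F x = mderiv F x + F x * Vmat A x := rfl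
  have : UstarAct A (Uact A F) x = -mderiv (Uact A F) x + Uact A F x * Vmat A x := rfl
  rw [this, key, hU, add_mul, mul_assoc]
  have hfinal : F x * (Vmat A x * Vmat A x) - F x * W
      = (x ^ 2 - 1) • F x + F x * fromBlocks (A * A) 0 0 (A * A + (2 : ℝ) • 1) := by
    rw [← mul_sub, hW, vmat_sq_sub, mul_add, mul_smul_comm, mul_one]
  have := hfinal
  abel_nf
  abel_nf at this
  linear_combination (norm := abel) this
end
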